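/- arXiv:1110.6614 — 3 statements merged into one kernel-verified Lean document; each statement's English description precedes it below -/
import Mathlib

section
/- Let p, q : F₂ → ℤ each be a finite ℤ-linear combination of indicator functions of cylinder sets, i.e. p = Σ_{i=1}^{n} c_i·1_{B(t_i)} and q = Σ_{j=1}^{m} d_j·1_{B(s_j)} with c_i, d_j ∈ ℤ and t_i, s_j ∈ F₂ \ {e}. Then the function (p + q) − (a·p + b·q) is finitely supported if and only if there exist integers n₀, k₀ ∈ ℤ such that p − n₀·1 and q − k₀·1 are finitely supported. -/
open scoped Pointwise

/-- The free group on two generators. -/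
abbrev F₂ := FreeGroup Bool

/-- The generator `a`. -/
def ga : F₂ := FreeGroup.of true

/-- The generator `b`. -/
def gb : F₂ := FreeGroup.of false

/-- The word length `|w|` of an element of the free group. -/
def wl (w : F₂) : ℕ := w.toWord.length

/-- The cylinder set `B(t)` of elements whose reduced word begins with the reduced word of `t`. -/
def cyl (t : F₂) : Set F₂ := {x | ∃ y : F₂, x = t * y ∧ wl x = wl t + wl y}
/-- The translate `g·f` of a function, `(g·f)(x) = f(g⁻¹x)`. -/
def tr (g : F₂) (f : F₂ → ℤ) : F₂ → ℤ := fun x => f (g⁻¹ * x)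

/-- The integer-valued indicator function of a set. -/
noncomputable def ind (S : Set F₂) : F₂ → ℤ := S.indicator 1

/-- A function is finitely supported if it vanishes outside a finite set. -/
def FinSupp (f : F₂ → ℤ) : Prop := (Function.support f).Finite

namespace FF

abbrev L2 := List (Bool × Bool)
def la : Bool × Bool := (true, true)
def lA : Bool × Bool := (true, false)
def lb : Bool × Bool := (false, true)
def lB : Bool × Bool := (false, false)

def Rd (l : L2) : Prop := List.Chain' (fun u v => v ≠ (u.1, !u.2)) l

lemma rd_nil : Rd [] := List.isChain_nil

lemma rd_cons {u : Bool × Bool} {z : L2} (hz : Rd z)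
    (h : ∀ v ∈ z.head?, v ≠ (u.1, !u.2)) : Rd (u :: z) :=
  List.isChain_cons.2 ⟨h, hz⟩

lemma rd_cons_iff {u : Bool × Bool} {z : L2} :
    Rd (u :: z) ↔ (∀ v ∈ z.head?, v ≠ (u.1, !u.2)) ∧ Rd z := List.isChain_cons

lemma reduce_eq_self_of_rd : ∀ {l : L2}, Rd l → FreeGroup.reduce l = l := by
  intro l
  induction l with
  | nil => intro _; rfl
  | cons u t ih =>
    intro h
    rw [FreeGroup.reduce.cons]
    rw [rd_cons_iff] at h
    rw [ih h.2]
    cases t with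
    | nil => rfl
    | cons v t2 =>
      have hv : v ≠ (u.1, !u.2) := h.1 v rfl
      have : ¬(u.1 = v.1 ∧ u.2 = !v.2) := by
        rintro ⟨h1, h2⟩
        apply hv
        ext
        · exact h1.symm
        · simp [h2]
      simp only [this, if_false]

lemma rd_reduce : ∀ (l : L2), Rd (FreeGroup.reduce l) := by
  intro l
  induction l with
  | nil => exact rd_nil
  | cons u t ih =>
    rw [FreeGroup.reduce.cons]
    rcases hred : FreeGroup.reduce t with _ | ⟨v, t2⟩
    · exact List.isChain_singleton u
    · rw [hred] at ih
      by_cases hc : u.1 = v.1 ∧ u.2 = !v.2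
      · simp only [hc, and_self, if_true]
        exact (rd_cons_iff.1 ih).2
      · simp only [hc, if_false]
        refine rd_cons ih ?_
        intro w hw
        simp only [List.head?_cons, Option.mem_def, Option.some.injEq] at hw
        subst hw
        intro hv
        apply hc
        rw [hv]
        exact ⟨rfl, by simp⟩

lemma rd_toWord (x : F₂) : Rd x.toWord := by
  have := FreeGroup.reduce_toWord x
  rw [← this]; exact rd_reduce _

lemma toWord_mk_rd {l : L2} (h : Rd l) : (FreeGroup.mk l).toWord = l := by
  rw [FreeGroup.toWord_mk, reduce_eq_self_of_rd h]

lemma wl_mk_rd {l : L2} (h : Rd l) : wl (FreeGroup.mk l) = l.length := by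
  rw [wl, toWord_mk_rd h]

lemma rd_append_left {l m : L2} (h : Rd (l ++ m)) : Rd l :=
  (List.isChain_append.1 h).1

lemma rd_append_right {l m : L2} (h : Rd (l ++ m)) : Rd m :=
  (List.isChain_append.1 h).2.1

end FF

namespace FF

/-- membership in a cylinder is prefix of reduced words -/
lemma mem_cyl_iff {t x : F₂} : x ∈ cyl t ↔ t.toWord <+: x.toWord := by
  constructor
  · rintro ⟨y, rfl, hlen⟩
    have hmul : t * y = FreeGroup.mk (t.toWord ++ y.toWord) := by
      conv_lhs => rw [← FreeGroup.mk_toWord (x := t), ← FreeGroup.mk_toWord (x := y)]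
      rw [FreeGroup.mul_mk]
    have hred : FreeGroup.Red (t.toWord ++ y.toWord) ((t * y).toWord) := by
      rw [hmul, FreeGroup.toWord_mk]
      exact FreeGroup.reduce.red
    have hsub := hred.sublist
    have hlen2 : ((t*y).toWord).length = (t.toWord ++ y.toWord).length := by
      simp only [List.length_append]
      have : wl (t*y) = wl t + wl y := hlen
      simpa [wl] using this
    have heq := hsub.eq_of_length hlen2
    exact ⟨y.toWord, heq.symm⟩
  · rintro ⟨m, hm⟩
    have hrdx := rd_toWord x
    have hrdm : Rd m := by
      rw [← hm] at hrdx
      exact rd_append_right hrdx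
    refine ⟨FreeGroup.mk m, ?_, ?_⟩
    · conv_lhs => rw [← FreeGroup.mk_toWord (x := x)]
      rw [← hm]
      conv_rhs => rw [← FreeGroup.mk_toWord (x := t)]
      rw [FreeGroup.mul_mk]
    · rw [wl, wl, wl_mk_rd hrdm, ← hm, List.length_append]

/-- locality of a cylinder-sum -/
lemma loc_of_sum {n : ℕ} (c : Fin n → ℤ) (t : Fin n → F₂) (N : ℕ)
    (hN : ∀ i, wl (t i) ≤ N) (l m : L2) (h : Rd (l ++ m)) (hl : N ≤ l.length) :
    (∑ i, c i • ind (cyl (t i))) (FreeGroup.mk (l ++ m))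
      = (∑ i, c i • ind (cyl (t i))) (FreeGroup.mk l) := by
  have hrdl : Rd l := rd_append_left h
  simp only [Finset.sum_apply, Pi.smul_apply]
  refine Finset.sum_congr rfl fun i _ => ?_
  congr 1
  have hmem : FreeGroup.mk (l ++ m) ∈ cyl (t i) ↔ FreeGroup.mk l ∈ cyl (t i) := by
    rw [mem_cyl_iff, mem_cyl_iff, toWord_mk_rd h, toWord_mk_rd hrdl]
    exact List.isPrefix_append_of_length (by simp [wl] at hN ⊢; exact le_trans (hN i) hl)
  unfold ind
  by_cases hx : FreeGroup.mk (l ++ m) ∈ cyl (t i)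
  · rw [Set.indicator_of_mem hx, Set.indicator_of_mem (hmem.1 hx)]; rfl
  · rw [Set.indicator_of_notMem hx, Set.indicator_of_notMem (fun hc => hx (hmem.2 hc))]

/-- left multiplication by a single letter, on reduced words -/
def lm (w : Bool × Bool) : L2 → L2
  | [] => [w]
  | v :: t => if v = (w.1, !w.2) then t else w :: v :: t

lemma lm_cancel (w : Bool × Bool) (t : L2) : lm w ((w.1, !w.2) :: t) = t := by
  simp [lm]

lemma lm_eq_cons {w : Bool × Bool} :
    ∀ {l : L2}, (∀ v ∈ l.head?, v ≠ (w.1, !w.2)) → lm w l = w :: l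
  | [], _ => rfl
  | v :: t, h => by
    have := h v rfl
    simp [lm, this]

lemma rd_lm {w : Bool × Bool} {l : L2} (h : Rd l) : Rd (lm w l) := by
  cases l with
  | nil => exact List.isChain_singleton w
  | cons v t =>
    by_cases hv : v = (w.1, !w.2)
    · subst hv; rw [lm_cancel]; exact (rd_cons_iff.1 h).2
    · rw [lm_eq_cons (by intro u hu; simp at hu; subst hu; exact hv)]
      refine rd_cons h ?_
      intro u hu; simp at hu; subst hu
      exact hv

lemma mk_lm (w : Bool × Bool) (l : L2) :
    FreeGroup.mk (lm w l) = FreeGroup.mk [w] * FreeGroup.mk l := by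
  rw [FreeGroup.mul_mk]
  cases l with
  | nil => rfl
  | cons v t =>
    by_cases hv : v = (w.1, !w.2)
    · subst hv
      rw [lm_cancel]
      symm
      apply FreeGroup.reduce.exact
      apply FreeGroup.reduce.Step.eq
      have h2 : [w] ++ (w.1, !w.2) :: t = (w.1, w.2) :: (w.1, !w.2) :: t := by simp
      rw [h2]
      exact FreeGroup.Red.Step.cons_not
    · rw [lm_eq_cons (by intro u hu; simp at hu; subst hu; exact hv)]
      rfl

lemma ga_inv_mul (l : L2) : ga⁻¹ * FreeGroup.mk l = FreeGroup.mk (lm lA l) := by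
  rw [mk_lm]
  congr 1

lemma gb_inv_mul (l : L2) : gb⁻¹ * FreeGroup.mk l = FreeGroup.mk (lm lB l) := by
  rw [mk_lm]
  congr 1

end FF

namespace FF

def ap (k : ℕ) : L2 := List.replicate k la
def Ap (k : ℕ) : L2 := List.replicate k lA

@[simp] lemma length_ap (k : ℕ) : (ap k).length = k := by simp [ap]
@[simp] lemma length_Ap (k : ℕ) : (Ap k).length = k := by simp [Ap]

@[simp] lemma inv_la : ((la.1, !la.2) : Bool × Bool) = lA := rfl
@[simp] lemma inv_lA : ((lA.1, !lA.2) : Bool × Bool) = la := rfl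
@[simp] lemma inv_lb : ((lb.1, !lb.2) : Bool × Bool) = lB := rfl
@[simp] lemma inv_lB : ((lB.1, !lB.2) : Bool × Bool) = lb := rfl

lemma ap_succ (k : ℕ) (t : L2) : ap (k+1) ++ t = la :: (ap k ++ t) := by
  simp [ap, List.replicate_succ]

lemma Ap_succ (k : ℕ) (t : L2) : Ap (k+1) ++ t = lA :: (Ap k ++ t) := by
  simp [Ap, List.replicate_succ]

lemma Ap_snoc (k : ℕ) (t : L2) : Ap (k+1) ++ t = Ap k ++ (lA :: t) := by
  rw [Ap, Ap, List.replicate_succ', List.append_assoc]; rfl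

lemma ap_split {n k : ℕ} (h : n ≤ k) : ap k = ap n ++ ap (k - n) := by
  rw [ap, ap, ap, ← List.replicate_add]
  congr 1; omega

lemma head?_rep_append (w : Bool × Bool) (k : ℕ) (t : L2) :
    (List.replicate (k+1) w ++ t).head? = some w := by
  simp [List.replicate_succ]

lemma self_ok (w : Bool × Bool) : w ≠ (w.1, !w.2) := by
  intro hc
  have := congrArg Prod.snd hc
  simp at this

lemma rd_rep_append (w : Bool × Bool) {z : L2} (k : ℕ) (hz : Rd z)
    (h : ∀ v ∈ z.head?, v ≠ (w.1, !w.2)) : Rd (List.replicate k w ++ z) := by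
  induction k with
  | zero => simpa using hz
  | succ k ih =>
    rw [List.replicate_succ, List.cons_append]
    refine rd_cons ih ?_
    intro v hv
    cases k with
    | zero =>
      simp only [List.replicate, List.nil_append] at hv
      exact h v hv
    | succ k =>
      rw [head?_rep_append] at hv
      simp only [Option.mem_def, Option.some.injEq] at hv
      subst hv
      exact self_ok w

lemma rd_replicate (k : ℕ) (w : Bool × Bool) : Rd (List.replicate k w) := by
  have := rd_rep_append w (z := []) k rd_nil (by simp)
  simpa using this

lemma lm_lA_ap (i : ℕ) (t : L2) : lm lA (ap (i+1) ++ t) = ap i ++ t := by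
  rw [ap_succ, ← inv_lA]
  exact lm_cancel _ _

lemma lm_lB_lb (z : L2) : lm lB (lb :: z) = z := by
  rw [← inv_lB]
  exact lm_cancel _ _

lemma lm_lA_cons (l : L2) (h : ∀ v ∈ l.head?, v ≠ la) : lm lA l = lA :: l := by
  refine lm_eq_cons ?_
  simpa using h

lemma lm_lB_cons (l : L2) (h : ∀ v ∈ l.head?, v ≠ lb) : lm lB l = lB :: l := by
  refine lm_eq_cons ?_
  simpa using h

lemma take_congr_append {z z' : L2} (σ : L2) {k d : ℕ} (h : z.take k = z'.take k)
    (hd : d ≤ σ.length + k) : (σ ++ z).take d = (σ ++ z').take d := by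
  rw [List.take_append, List.take_append]
  congr 1
  have h1 : d - σ.length ≤ k := by omega
  calc z.take (d - σ.length)
      = (z.take k).take (d - σ.length) := by rw [List.take_take, min_eq_left h1]
    _ = (z'.take k).take (d - σ.length) := by rw [h]
    _ = z'.take (d - σ.length) := by rw [List.take_take, min_eq_left h1]

lemma head?_take {k : ℕ} (hk : 1 ≤ k) (l : L2) : (l.take k).head? = l.head? := by
  cases l with
  | nil => simp
  | cons a t =>
    obtain ⟨k', rfl⟩ : ∃ k', k = k' + 1 := ⟨k - 1, by omega⟩
    simp [List.take_succ_cons]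

def Dep (Q : L2 → ℤ) (T d : ℕ) : Prop :=
  ∀ z z' : L2, Rd z → Rd z' → T ≤ z.length → T ≤ z'.length → z.take d = z'.take d → Q z = Q z'

end FF

namespace FF

section Core

variable {P Q : L2 → ℤ} {N R T : ℕ}

lemma caseA
    (hRT : R ≤ T) (hNT : N + 1 ≤ T)
    (locP : ∀ l m, Rd (l ++ m) → N ≤ l.length → P (l ++ m) = P l)
    (heq : ∀ l, Rd l → R ≤ l.length → P l + Q l = P (lm lA l) + Q (lm lB l))
    {d : ℕ} (hd : 1 ≤ d) (hdep : Dep Q T d)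
    {z z' : L2} (hz : Rd z) (hz' : Rd z') (hlz : T ≤ z.length) (hlz' : T ≤ z'.length)
    (hhz : ∀ v ∈ z.head?, v ≠ lB) (hhz' : ∀ v ∈ z'.head?, v ≠ lB)
    (ht : z.take (d-1) = z'.take (d-1)) :
    Q z = Q z' := by
  -- η := lb :: z
  have hη : Rd (lb :: z) := by
    refine rd_cons hz ?_
    intro v hv; rw [inv_lb]; exact hhz v hv
  have hη' : Rd (lb :: z') := by
    refine rd_cons hz' ?_
    intro v hv; rw [inv_lb]; exact hhz' v hv
  have rdap : ∀ i, Rd (ap i ++ (lb :: z)) := by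
    intro i
    refine rd_rep_append la i hη ?_
    intro v hv; simp only [List.head?_cons, Option.mem_def, Option.some.injEq] at hv
    subst hv; rw [inv_la]; decide
  have rdap' : ∀ i, Rd (ap i ++ (lb :: z')) := by
    intro i
    refine rd_rep_append la i hη' ?_
    intro v hv; simp only [List.head?_cons, Option.mem_def, Option.some.injEq] at hv
    subst hv; rw [inv_la]; decide
  have rdAp : ∀ i, Rd (Ap i ++ (lb :: z)) := by
    intro i
    refine rd_rep_append lA i hη ?_
    intro v hv; simp only [List.head?_cons, Option.mem_def, Option.some.injEq] at hv
    subst hv; rw [inv_lA]; decide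
  have rdAp' : ∀ i, Rd (Ap i ++ (lb :: z')) := by
    intro i
    refine rd_rep_append lA i hη' ?_
    intro v hv; simp only [List.head?_cons, Option.mem_def, Option.some.injEq] at hv
    subst hv; rw [inv_lA]; decide
  have rdBap : ∀ i, Rd (lB :: (ap (i+1) ++ (lb :: z))) := by
    intro i
    refine rd_cons (rdap (i+1)) ?_
    intro v hv
    rw [show ap (i+1) ++ (lb :: z) = List.replicate (i+1) la ++ (lb :: z) from rfl,
      head?_rep_append] at hv
    simp only [Option.mem_def, Option.some.injEq] at hv
    subst hv; rw [inv_lB]; decide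
  have rdBap' : ∀ i, Rd (lB :: (ap (i+1) ++ (lb :: z'))) := by
    intro i
    refine rd_cons (rdap' (i+1)) ?_
    intro v hv
    rw [show ap (i+1) ++ (lb :: z') = List.replicate (i+1) la ++ (lb :: z') from rfl,
      head?_rep_append] at hv
    simp only [Option.mem_def, Option.some.injEq] at hv
    subst hv; rw [inv_lB]; decide
  have rdBAp : ∀ i, Rd (lB :: (Ap (i+1) ++ (lb :: z))) := by
    intro i
    refine rd_cons (rdAp (i+1)) ?_
    intro v hv
    rw [show Ap (i+1) ++ (lb :: z) = List.replicate (i+1) lA ++ (lb :: z) from rfl,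
      head?_rep_append] at hv
    simp only [Option.mem_def, Option.some.injEq] at hv
    subst hv; rw [inv_lB]; decide
  have rdBAp' : ∀ i, Rd (lB :: (Ap (i+1) ++ (lb :: z'))) := by
    intro i
    refine rd_cons (rdAp' (i+1)) ?_
    intro v hv
    rw [show Ap (i+1) ++ (lb :: z') = List.replicate (i+1) lA ++ (lb :: z') from rfl,
      head?_rep_append] at hv
    simp only [Option.mem_def, Option.some.injEq] at hv
    subst hv; rw [inv_lB]; decide
  -- the Dep-d pairing
  have pairQ : ∀ σ : L2, Rd (σ ++ (lb :: z)) → Rd (σ ++ (lb :: z')) →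
      Q (σ ++ (lb :: z)) = Q (σ ++ (lb :: z')) := by
    intro σ h1 h2
    have e1 : σ ++ (lb :: z) = (σ ++ [lb]) ++ z := by simp
    have e2 : σ ++ (lb :: z') = (σ ++ [lb]) ++ z' := by simp
    rw [e1] at h1 ⊢
    rw [e2] at h2 ⊢
    refine hdep _ _ h1 h2 ?_ ?_ ?_
    · simp only [List.length_append]; omega
    · simp only [List.length_append]; omega
    · exact take_congr_append _ ht (by simp; omega)
  -- lengths
  have lenap : ∀ i, R ≤ (ap i ++ (lb :: z)).length := by
    intro i; simp only [List.length_append, length_ap, List.length_cons]; omega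
  have lenap' : ∀ i, R ≤ (ap i ++ (lb :: z')).length := by
    intro i; simp only [List.length_append, length_ap, List.length_cons]; omega
  have lenAp : ∀ i, R ≤ (Ap i ++ (lb :: z)).length := by
    intro i; simp only [List.length_append, length_Ap, List.length_cons]; omega
  have lenAp' : ∀ i, R ≤ (Ap i ++ (lb :: z')).length := by
    intro i; simp only [List.length_append, length_Ap, List.length_cons]; omega
  -- head? facts for lm computations
  have hdap : ∀ i : ℕ, ∀ v ∈ (ap (i+1) ++ (lb :: z)).head?, v ≠ lb := by
    intro i v hv
    rw [show ap (i+1) ++ (lb :: z) = List.replicate (i+1) la ++ (lb :: z) from rfl,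
      head?_rep_append] at hv
    simp only [Option.mem_def, Option.some.injEq] at hv
    subst hv; decide
  have hdap' : ∀ i : ℕ, ∀ v ∈ (ap (i+1) ++ (lb :: z')).head?, v ≠ lb := by
    intro i v hv
    rw [show ap (i+1) ++ (lb :: z') = List.replicate (i+1) la ++ (lb :: z') from rfl,
      head?_rep_append] at hv
    simp only [Option.mem_def, Option.some.injEq] at hv
    subst hv; decide
  have hdAp : ∀ i : ℕ, ∀ v ∈ (Ap (i+1) ++ (lb :: z)).head?, v ≠ lb := by
    intro i v hv
    rw [show Ap (i+1) ++ (lb :: z) = List.replicate (i+1) lA ++ (lb :: z) from rfl,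
      head?_rep_append] at hv
    simp only [Option.mem_def, Option.some.injEq] at hv
    subst hv; decide
  have hdAp' : ∀ i : ℕ, ∀ v ∈ (Ap (i+1) ++ (lb :: z')).head?, v ≠ lb := by
    intro i v hv
    rw [show Ap (i+1) ++ (lb :: z') = List.replicate (i+1) lA ++ (lb :: z') from rfl,
      head?_rep_append] at hv
    simp only [Option.mem_def, Option.some.injEq] at hv
    subst hv; decide
  have hdAAp : ∀ i : ℕ, ∀ v ∈ (Ap (i+1) ++ (lb :: z)).head?, v ≠ la := by
    intro i v hv
    rw [show Ap (i+1) ++ (lb :: z) = List.replicate (i+1) lA ++ (lb :: z) from rfl,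
      head?_rep_append] at hv
    simp only [Option.mem_def, Option.some.injEq] at hv
    subst hv; decide
  have hdAAp' : ∀ i : ℕ, ∀ v ∈ (Ap (i+1) ++ (lb :: z')).head?, v ≠ la := by
    intro i v hv
    rw [show Ap (i+1) ++ (lb :: z') = List.replicate (i+1) lA ++ (lb :: z') from rfl,
      head?_rep_append] at hv
    simp only [Option.mem_def, Option.some.injEq] at hv
    subst hv; decide
  -- claim2 : P agrees on  ap i ++ η  vs  ap i ++ η'
  have claim2 : ∀ k i, i + k = N → P (ap i ++ (lb :: z)) = P (ap i ++ (lb :: z')) := by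
    intro k
    induction k with
    | zero =>
      intro i hi
      have hi' : i = N := by omega
      rw [hi']
      rw [locP (ap N) (lb :: z) (rdap N) (by simp),
        locP (ap N) (lb :: z') (rdap' N) (by simp)]
    | succ k ih =>
      intro i hi
      have e1 := heq (ap (i+1) ++ (lb :: z)) (rdap (i+1)) (lenap (i+1))
      have e2 := heq (ap (i+1) ++ (lb :: z')) (rdap' (i+1)) (lenap' (i+1))
      rw [lm_lA_ap, lm_lB_cons _ (hdap i)] at e1
      rw [lm_lA_ap, lm_lB_cons _ (hdap' i)] at e2
      have q1 : Q (ap (i+1) ++ (lb :: z)) = Q (ap (i+1) ++ (lb :: z')) :=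
        pairQ (ap (i+1)) (rdap (i+1)) (rdap' (i+1))
      have q2 : Q (lB :: (ap (i+1) ++ (lb :: z))) = Q (lB :: (ap (i+1) ++ (lb :: z'))) :=
        pairQ (lB :: ap (i+1)) (rdBap i) (rdBap' i)
      have p1 : P (ap (i+1) ++ (lb :: z)) = P (ap (i+1) ++ (lb :: z')) := ih (i+1) (by omega)
      linarith
  -- claim1 : P agrees on  Ap i ++ η  vs  Ap i ++ η', for i ≥ 1
  have claim1 : ∀ k i, i + k = N + 1 → 1 ≤ i →
      P (Ap i ++ (lb :: z)) = P (Ap i ++ (lb :: z')) := by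
    intro k
    induction k with
    | zero =>
      intro i hi _
      have hi' : i = N + 1 := by omega
      rw [hi']
      rw [Ap_snoc, Ap_snoc]
      rw [locP (Ap N) (lA :: (lb :: z)) (by rw [← Ap_snoc]; exact rdAp (N+1)) (by simp),
        locP (Ap N) (lA :: (lb :: z')) (by rw [← Ap_snoc]; exact rdAp' (N+1)) (by simp)]
    | succ k ih =>
      intro i hi hi1
      obtain ⟨j, rfl⟩ : ∃ j, i = j + 1 := ⟨i - 1, by omega⟩
      have e1 := heq (Ap (j+1) ++ (lb :: z)) (rdAp (j+1)) (lenAp (j+1))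
      have e2 := heq (Ap (j+1) ++ (lb :: z')) (rdAp' (j+1)) (lenAp' (j+1))
      rw [lm_lA_cons _ (hdAAp j), lm_lB_cons _ (hdAp j), ← Ap_succ] at e1
      rw [lm_lA_cons _ (hdAAp' j), lm_lB_cons _ (hdAp' j), ← Ap_succ] at e2
      have q1 : Q (Ap (j+1) ++ (lb :: z)) = Q (Ap (j+1) ++ (lb :: z')) :=
        pairQ (Ap (j+1)) (rdAp (j+1)) (rdAp' (j+1))
      have q2 : Q (lB :: (Ap (j+1) ++ (lb :: z))) = Q (lB :: (Ap (j+1) ++ (lb :: z'))) :=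
        pairQ (lB :: Ap (j+1)) (rdBAp j) (rdBAp' j)
      have p1 : P (Ap (j+2) ++ (lb :: z)) = P (Ap (j+2) ++ (lb :: z')) := ih (j+2) (by omega) (by omega)
      linarith
  -- exposed instance
  have e1 := heq (lb :: z) hη (by simp; omega)
  have e2 := heq (lb :: z') hη' (by simp; omega)
  rw [lm_lA_cons _ (by intro v hv; simp at hv; subst hv; decide), lm_lB_lb] at e1
  rw [lm_lA_cons _ (by intro v hv; simp at hv; subst hv; decide), lm_lB_lb] at e2
  have p0 : P (lb :: z) = P (lb :: z') := by
    have := claim2 N 0 (by omega)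
    simpa [ap] using this
  have p1 : P (lA :: (lb :: z)) = P (lA :: (lb :: z')) := by
    have := claim1 N 1 (by omega) (by omega)
    simpa [Ap, List.replicate_succ] using this
  have q0 : Q (lb :: z) = Q (lb :: z') := by
    have := pairQ [] hη hη'
    simpa using this
  linarith


lemma caseB
    (hRT : R ≤ T) (hNT : N + 1 ≤ T)
    (locP : ∀ l m, Rd (l ++ m) → N ≤ l.length → P (l ++ m) = P l)
    (heq : ∀ l, Rd l → R ≤ l.length → P l + Q l = P (lm lA l) + Q (lm lB l))
    {d : ℕ} (hd : 1 ≤ d) (hdep : Dep Q T d)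
    {z z' : L2} (hz : Rd z) (hz' : Rd z') (hlz : T ≤ z.length) (hlz' : T ≤ z'.length)
    (hhz : z.head? = some lB) (hhz' : z'.head? = some lB)
    (ht : z.take (d-1) = z'.take (d-1)) :
    Q z = Q z' := by
  have rdap : ∀ i, Rd (ap i ++ z) := by
    intro i
    refine rd_rep_append la i hz ?_
    intro v hv; rw [hhz] at hv
    simp only [Option.mem_def, Option.some.injEq] at hv
    subst hv; rw [inv_la]; decide
  have rdap' : ∀ i, Rd (ap i ++ z') := by
    intro i
    refine rd_rep_append la i hz' ?_
    intro v hv; rw [hhz'] at hv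
    simp only [Option.mem_def, Option.some.injEq] at hv
    subst hv; rw [inv_la]; decide
  have rdAp : ∀ i, Rd (Ap i ++ z) := by
    intro i
    refine rd_rep_append lA i hz ?_
    intro v hv; rw [hhz] at hv
    simp only [Option.mem_def, Option.some.injEq] at hv
    subst hv; rw [inv_lA]; decide
  have rdAp' : ∀ i, Rd (Ap i ++ z') := by
    intro i
    refine rd_rep_append lA i hz' ?_
    intro v hv; rw [hhz'] at hv
    simp only [Option.mem_def, Option.some.injEq] at hv
    subst hv; rw [inv_lA]; decide
  have rdBap : ∀ i, Rd (lB :: (ap (i+1) ++ z)) := by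
    intro i
    refine rd_cons (rdap (i+1)) ?_
    intro v hv
    rw [show ap (i+1) ++ z = List.replicate (i+1) la ++ z from rfl, head?_rep_append] at hv
    simp only [Option.mem_def, Option.some.injEq] at hv
    subst hv; rw [inv_lB]; decide
  have rdBap' : ∀ i, Rd (lB :: (ap (i+1) ++ z')) := by
    intro i
    refine rd_cons (rdap' (i+1)) ?_
    intro v hv
    rw [show ap (i+1) ++ z' = List.replicate (i+1) la ++ z' from rfl, head?_rep_append] at hv
    simp only [Option.mem_def, Option.some.injEq] at hv
    subst hv; rw [inv_lB]; decide
  have rdBAp : ∀ i, Rd (lB :: (Ap (i+1) ++ z)) := by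
    intro i
    refine rd_cons (rdAp (i+1)) ?_
    intro v hv
    rw [show Ap (i+1) ++ z = List.replicate (i+1) lA ++ z from rfl, head?_rep_append] at hv
    simp only [Option.mem_def, Option.some.injEq] at hv
    subst hv; rw [inv_lB]; decide
  have rdBAp' : ∀ i, Rd (lB :: (Ap (i+1) ++ z')) := by
    intro i
    refine rd_cons (rdAp' (i+1)) ?_
    intro v hv
    rw [show Ap (i+1) ++ z' = List.replicate (i+1) lA ++ z' from rfl, head?_rep_append] at hv
    simp only [Option.mem_def, Option.some.injEq] at hv
    subst hv; rw [inv_lB]; decide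
  have pairQ : ∀ σ : L2, 1 ≤ σ.length → Rd (σ ++ z) → Rd (σ ++ z') →
      Q (σ ++ z) = Q (σ ++ z') := by
    intro σ hσ h1 h2
    refine hdep _ _ h1 h2 ?_ ?_ ?_
    · simp only [List.length_append]; omega
    · simp only [List.length_append]; omega
    · exact take_congr_append _ ht (by omega)
  have lenap : ∀ i, R ≤ (ap i ++ z).length := by
    intro i; simp only [List.length_append, length_ap]; omega
  have lenap' : ∀ i, R ≤ (ap i ++ z').length := by
    intro i; simp only [List.length_append, length_ap]; omega
  have lenAp : ∀ i, R ≤ (Ap i ++ z).length := by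
    intro i; simp only [List.length_append, length_Ap]; omega
  have lenAp' : ∀ i, R ≤ (Ap i ++ z').length := by
    intro i; simp only [List.length_append, length_Ap]; omega
  have hdap : ∀ i : ℕ, ∀ v ∈ (ap (i+1) ++ z).head?, v ≠ lb := by
    intro i v hv
    rw [show ap (i+1) ++ z = List.replicate (i+1) la ++ z from rfl, head?_rep_append] at hv
    simp only [Option.mem_def, Option.some.injEq] at hv
    subst hv; decide
  have hdap' : ∀ i : ℕ, ∀ v ∈ (ap (i+1) ++ z').head?, v ≠ lb := by
    intro i v hv
    rw [show ap (i+1) ++ z' = List.replicate (i+1) la ++ z' from rfl, head?_rep_append] at hv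
    simp only [Option.mem_def, Option.some.injEq] at hv
    subst hv; decide
  have hdAp : ∀ i : ℕ, ∀ v ∈ (Ap (i+1) ++ z).head?, v ≠ lb := by
    intro i v hv
    rw [show Ap (i+1) ++ z = List.replicate (i+1) lA ++ z from rfl, head?_rep_append] at hv
    simp only [Option.mem_def, Option.some.injEq] at hv
    subst hv; decide
  have hdAp' : ∀ i : ℕ, ∀ v ∈ (Ap (i+1) ++ z').head?, v ≠ lb := by
    intro i v hv
    rw [show Ap (i+1) ++ z' = List.replicate (i+1) lA ++ z' from rfl, head?_rep_append] at hv
    simp only [Option.mem_def, Option.some.injEq] at hv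
    subst hv; decide
  have hdAAp : ∀ i : ℕ, ∀ v ∈ (Ap (i+1) ++ z).head?, v ≠ la := by
    intro i v hv
    rw [show Ap (i+1) ++ z = List.replicate (i+1) lA ++ z from rfl, head?_rep_append] at hv
    simp only [Option.mem_def, Option.some.injEq] at hv
    subst hv; decide
  have hdAAp' : ∀ i : ℕ, ∀ v ∈ (Ap (i+1) ++ z').head?, v ≠ la := by
    intro i v hv
    rw [show Ap (i+1) ++ z' = List.replicate (i+1) lA ++ z' from rfl, head?_rep_append] at hv
    simp only [Option.mem_def, Option.some.injEq] at hv
    subst hv; decide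
  have claim2 : ∀ k i, i + k = N → P (ap i ++ z) = P (ap i ++ z') := by
    intro k
    induction k with
    | zero =>
      intro i hi
      have hi' : i = N := by omega
      rw [hi']
      rw [locP (ap N) z (rdap N) (by simp), locP (ap N) z' (rdap' N) (by simp)]
    | succ k ih =>
      intro i hi
      have e1 := heq (ap (i+1) ++ z) (rdap (i+1)) (lenap (i+1))
      have e2 := heq (ap (i+1) ++ z') (rdap' (i+1)) (lenap' (i+1))
      rw [lm_lA_ap, lm_lB_cons _ (hdap i)] at e1
      rw [lm_lA_ap, lm_lB_cons _ (hdap' i)] at e2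
      have q1 : Q (ap (i+1) ++ z) = Q (ap (i+1) ++ z') :=
        pairQ (ap (i+1)) (by simp) (rdap (i+1)) (rdap' (i+1))
      have q2 : Q (lB :: (ap (i+1) ++ z)) = Q (lB :: (ap (i+1) ++ z')) :=
        pairQ (lB :: ap (i+1)) (by simp) (rdBap i) (rdBap' i)
      have p1 : P (ap (i+1) ++ z) = P (ap (i+1) ++ z') := ih (i+1) (by omega)
      linarith
  have claim1 : ∀ k i, i + k = N + 1 → 1 ≤ i → P (Ap i ++ z) = P (Ap i ++ z') := by
    intro k
    induction k with
    | zero =>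
      intro i hi _
      have hi' : i = N + 1 := by omega
      rw [hi']
      rw [Ap_snoc, Ap_snoc]
      rw [locP (Ap N) (lA :: z) (by rw [← Ap_snoc]; exact rdAp (N+1)) (by simp),
        locP (Ap N) (lA :: z') (by rw [← Ap_snoc]; exact rdAp' (N+1)) (by simp)]
    | succ k ih =>
      intro i hi hi1
      obtain ⟨j, rfl⟩ : ∃ j, i = j + 1 := ⟨i - 1, by omega⟩
      have e1 := heq (Ap (j+1) ++ z) (rdAp (j+1)) (lenAp (j+1))
      have e2 := heq (Ap (j+1) ++ z') (rdAp' (j+1)) (lenAp' (j+1))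
      rw [lm_lA_cons _ (hdAAp j), lm_lB_cons _ (hdAp j), ← Ap_succ] at e1
      rw [lm_lA_cons _ (hdAAp' j), lm_lB_cons _ (hdAp' j), ← Ap_succ] at e2
      have q1 : Q (Ap (j+1) ++ z) = Q (Ap (j+1) ++ z') :=
        pairQ (Ap (j+1)) (by simp) (rdAp (j+1)) (rdAp' (j+1))
      have q2 : Q (lB :: (Ap (j+1) ++ z)) = Q (lB :: (Ap (j+1) ++ z')) :=
        pairQ (lB :: Ap (j+1)) (by simp) (rdBAp j) (rdBAp' j)
      have p1 : P (Ap (j+2) ++ z) = P (Ap (j+2) ++ z') := ih (j+2) (by omega) (by omega)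
      linarith
  -- exposed instance
  have e1 := heq z hz (by omega)
  have e2 := heq z' hz' (by omega)
  rw [lm_lA_cons _ (by intro v hv; rw [hhz] at hv; simp at hv; subst hv; decide),
    lm_lB_cons _ (by intro v hv; rw [hhz] at hv; simp at hv; subst hv; decide)] at e1
  rw [lm_lA_cons _ (by intro v hv; rw [hhz'] at hv; simp at hv; subst hv; decide),
    lm_lB_cons _ (by intro v hv; rw [hhz'] at hv; simp at hv; subst hv; decide)] at e2
  have p0 : P z = P z' := by
    have := claim2 N 0 (by omega)
    simpa [ap] using this
  have p1 : P (lA :: z) = P (lA :: z') := by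
    have := claim1 N 1 (by omega) (by omega)
    simpa [Ap, List.replicate_succ] using this
  have qB : Q (lB :: z) = Q (lB :: z') := by
    obtain ⟨d', rfl⟩ : ∃ d', d = d' + 1 := ⟨d - 1, by omega⟩
    refine hdep _ _ ?_ ?_ ?_ ?_ ?_
    · refine rd_cons hz ?_
      intro v hv; rw [hhz] at hv; simp at hv; subst hv; rw [inv_lB]; decide
    · refine rd_cons hz' ?_
      intro v hv; rw [hhz'] at hv; simp at hv; subst hv; rw [inv_lB]; decide
    · simp; omega
    · simp; omega
    · rw [List.take_succ_cons, List.take_succ_cons]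
      simpa using ht
  linarith

lemma dep_step
    (hRT : R ≤ T) (hNT : N + 1 ≤ T)
    (locP : ∀ l m, Rd (l ++ m) → N ≤ l.length → P (l ++ m) = P l)
    (heq : ∀ l, Rd l → R ≤ l.length → P l + Q l = P (lm lA l) + Q (lm lB l))
    {d : ℕ} (hd : 2 ≤ d) (hdep : Dep Q T d) : Dep Q T (d - 1) := by
  intro z z' hz hz' hlz hlz' ht
  have hhead : z.head? = z'.head? := by
    rw [← head?_take (by omega : 1 ≤ d - 1) z, ← head?_take (by omega : 1 ≤ d - 1) z', ht]
  obtain ⟨u, zt, rfl⟩ : ∃ u zt, z = u :: zt := by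
    cases z with
    | nil => simp at hlz; omega
    | cons u zt => exact ⟨u, zt, rfl⟩
  by_cases hu : u = lB
  · subst hu
    refine caseB hRT hNT locP heq (by omega : 1 ≤ d) hdep hz hz' hlz hlz' rfl ?_ ht
    rw [← hhead]; rfl
  · refine caseA hRT hNT locP heq (by omega : 1 ≤ d) hdep hz hz' hlz hlz' ?_ ?_ ht
    · intro v hv; simp at hv; subst hv; exact hu
    · intro v hv
      rw [← hhead] at hv
      simp at hv; subst hv; exact hu

lemma core
    (hN : 1 ≤ N)
    (locP : ∀ l m, Rd (l ++ m) → N ≤ l.length → P (l ++ m) = P l)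
    (locQ : ∀ l m, Rd (l ++ m) → N ≤ l.length → Q (l ++ m) = Q l)
    (heq : ∀ l, Rd l → R ≤ l.length → P l + Q l = P (lm lA l) + Q (lm lB l)) :
    ∃ k₀, ∀ l, Rd l → R + N + 2 ≤ l.length → Q l = k₀ := by
  set T := R + N + 2 with hT
  have hRT : R ≤ T := by omega
  have hNT : N + 1 ≤ T := by omega
  have depN : Dep Q T N := by
    intro z z' hz hz' hlz hlz' ht
    have h1 : Q z = Q (z.take N) := by
      conv_lhs => rw [← List.take_append_drop N z]
      exact locQ _ _ (by rw [List.take_append_drop]; exact hz) (by rw [List.length_take]; omega)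
    have h2 : Q z' = Q (z'.take N) := by
      conv_lhs => rw [← List.take_append_drop N z']
      exact locQ _ _ (by rw [List.take_append_drop]; exact hz') (by rw [List.length_take]; omega)
    rw [h1, h2, ht]
  have dep1 : Dep Q T 1 := by
    have H : ∀ k, k + 1 ≤ N → Dep Q T (N - k) := by
      intro k
      induction k with
      | zero => intro _; simpa using depN
      | succ k ih =>
        intro hk
        have h2 : 2 ≤ N - k := by omega
        have := dep_step hRT hNT locP heq h2 (ih (by omega))
        have he : N - (k + 1) = (N - k) - 1 := by omega
        rw [he]
        exact this
    have := H (N - 1) (by omega)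
    rwa [show N - (N - 1) = 1 by omega] at this
  -- bridge : Q (lB :: ap T) = Q (ap T)
  have rdapT : ∀ k, Rd (ap k) := fun k => rd_replicate k la
  have hbr : Q (lB :: ap T) = Q (ap T) := by
    obtain ⟨K, hK⟩ : ∃ K, T = K + 1 := ⟨T - 1, by omega⟩
    have e := heq (ap T) (rdapT T) (by simp; omega)
    have h1 : lm lA (ap T) = ap K := by
      have := lm_lA_ap K []
      rw [hK]
      simpa using this
    have h2 : lm lB (ap T) = lB :: ap T := by
      refine lm_lB_cons _ ?_
      intro v hv
      rw [hK, show ap (K+1) = List.replicate (K+1) la from rfl, List.head?_replicate] at hv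
      simp at hv; subst hv; decide
    rw [h1, h2] at e
    have p1 : P (ap T) = P (ap N) := by
      rw [ap_split (show N ≤ T by omega)]
      exact locP _ _ (by rw [← ap_split (show N ≤ T by omega)]; exact rdapT T) (by simp)
    have p2 : P (ap K) = P (ap N) := by
      rw [ap_split (show N ≤ K by omega)]
      exact locP _ _ (by rw [← ap_split (show N ≤ K by omega)]; exact rdapT K) (by simp)
    linarith
  refine ⟨Q (ap T), ?_⟩
  intro l hl hTl
  obtain ⟨u, lt, rfl⟩ : ∃ u lt, l = u :: lt := by
    cases l with
    | nil => simp only [List.length_nil] at hTl; omega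
    | cons u lt => exact ⟨u, lt, rfl⟩
  have hlenT : (ap T).length = T := by simp
  by_cases hu : u = lB
  · subst hu
    have h1 : Q (lB :: lt) = Q (lB :: ap T) := by
      refine dep1 _ _ hl ?_ hTl ?_ ?_
      · refine rd_cons (rdapT T) ?_
        intro v hv
        obtain ⟨K, hK⟩ : ∃ K, T = K + 1 := ⟨T - 1, by omega⟩
        rw [hK, show ap (K+1) = List.replicate (K+1) la from rfl, List.head?_replicate] at hv
        simp at hv; subst hv; rw [inv_lB]; decide
      · simp
      · rfl
    rw [h1, hbr]
  · refine caseA hRT hNT locP heq le_rfl dep1 hl (rdapT T) hTl (by simp) ?_ ?_ rfl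
    · intro v hv; simp at hv; subst hv; exact hu
    · intro v hv
      obtain ⟨K, hK⟩ : ∃ K, T = K + 1 := ⟨T - 1, by omega⟩
      rw [hK, show ap (K+1) = List.replicate (K+1) la from rfl, List.head?_replicate] at hv
      simp at hv; subst hv; decide


end Core

end FF

namespace FF

def φp (u : Bool × Bool) : Bool × Bool := (!u.1, u.2)
def φL (l : L2) : L2 := l.map φp

@[simp] lemma φL_φL (l : L2) : φL (φL l) = l := by
  simp [φL, List.map_map, φp, Function.comp_def]

@[simp] lemma length_φL (l : L2) : (φL l).length = l.length := by simp [φL]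

lemma φL_append (l m : L2) : φL (l ++ m) = φL l ++ φL m := by simp [φL]

lemma φp_inv (u : Bool × Bool) : ((φp u).1, !(φp u).2) = φp (u.1, !u.2) := rfl

lemma rd_φL {l : L2} (h : Rd l) : Rd (φL l) := by
  rw [Rd, φL, List.Chain', List.isChain_map]
  refine List.IsChain.imp ?_ h
  intro a b hab hc
  apply hab
  have : φp (φp b) = φp (φp (a.1, !a.2)) := by rw [hc, φp_inv]
  simpa [φp] using this

lemma lm_φL (u : Bool × Bool) (l : L2) : lm (φp u) (φL l) = φL (lm u l) := by
  cases l with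
  | nil => rfl
  | cons v t =>
    by_cases hv : v = (u.1, !u.2)
    · subst hv
      rw [lm_cancel]
      show lm (φp u) (φp (u.1, !u.2) :: φL t) = φL t
      rw [← φp_inv]
      exact lm_cancel _ _
    · have hv2 : φp v ≠ ((φp u).1, !(φp u).2) := by
        rw [φp_inv]
        intro hc
        apply hv
        have h3 : φp (φp v) = φp (φp (u.1, !u.2)) := by rw [hc]
        simpa [φp] using h3
      have h1 : lm u (v :: t) = u :: v :: t :=
        lm_eq_cons (by intro w hw; simp at hw; subst hw; exact hv)
      have h2 : lm (φp u) (φp v :: φL t) = φp u :: φp v :: φL t :=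
        lm_eq_cons (by intro w hw; simp at hw; subst hw; exact hv2)
      rw [h1]
      exact h2

lemma φp_lA : φp lB = lA := rfl
lemma φp_lB : φp lA = lB := rfl

lemma finsupp_bound {f : F₂ → ℤ} (h : FinSupp f) : ∃ R : ℕ, ∀ x, R ≤ wl x → f x = 0 := by
  have himg : (wl '' Function.support f).Finite := h.image wl
  obtain ⟨R, hR⟩ := himg.bddAbove
  refine ⟨R + 1, fun x hx => ?_⟩
  by_contra hfx
  have hmem : wl x ∈ wl '' Function.support f := ⟨x, hfx, rfl⟩
  have := hR hmem
  omega

lemma ball_finite (T : ℕ) : {x : F₂ | wl x ≤ T}.Finite := by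
  have h2 : ({l : L2 | l.length ≤ T}).Finite := List.finite_length_le _ T
  have h3 := h2.preimage (f := FreeGroup.toWord)
    (fun x _ y _ h => FreeGroup.toWord_injective h)
  exact h3.subset (fun x hx => hx)

end FF


open FF

/-- If `p` and `q` are finite ℤ-linear combinations of indicator functions of cylinder sets
`B(t)`, `t ≠ e`, then `(p + q) - (a·p + b·q)` is finitely supported iff `p` and `q` are,
up to finitely supported functions, integer multiples of the constant function `1`. -/
theorem stmt_0 (p q : F₂ → ℤ)
    (hp : ∃ (n : ℕ) (c : Fin n → ℤ) (t : Fin n → F₂),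
      (∀ i, t i ≠ 1) ∧ p = ∑ i, c i • ind (cyl (t i)))
    (hq : ∃ (m : ℕ) (d : Fin m → ℤ) (s : Fin m → F₂),
      (∀ j, s j ≠ 1) ∧ q = ∑ j, d j • ind (cyl (s j))) :
    FinSupp ((p + q) - (tr ga p + tr gb q)) ↔
      ∃ n₀ k₀ : ℤ, FinSupp (p - n₀ • (1 : F₂ → ℤ)) ∧ FinSupp (q - k₀ • (1 : F₂ → ℤ)) := by
  constructor
  · intro h
    obtain ⟨n, c, t0, -, hpe⟩ := hp
    obtain ⟨m, d0, s0, -, hqe⟩ := hq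
    set Np := Finset.univ.sup (fun i => wl (t0 i)) with hNp
    set Nq := Finset.univ.sup (fun j => wl (s0 j)) with hNq
    set N := max (max Np Nq) 1 with hNdef
    have hN1 : 1 ≤ N := by omega
    have hNt : ∀ i, wl (t0 i) ≤ N := by
      intro i
      have h1 : wl (t0 i) ≤ Np := Finset.le_sup (f := fun i => wl (t0 i)) (Finset.mem_univ i)
      omega
    have hNs : ∀ j, wl (s0 j) ≤ N := by
      intro j
      have h1 : wl (s0 j) ≤ Nq := Finset.le_sup (f := fun j => wl (s0 j)) (Finset.mem_univ j)
      omega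
    have locp : ∀ l m' : L2, Rd (l ++ m') → N ≤ l.length →
        p (FreeGroup.mk (l ++ m')) = p (FreeGroup.mk l) := by
      intro l m' hrd hl
      rw [hpe]
      exact loc_of_sum c t0 N hNt l m' hrd hl
    have locq : ∀ l m' : L2, Rd (l ++ m') → N ≤ l.length →
        q (FreeGroup.mk (l ++ m')) = q (FreeGroup.mk l) := by
      intro l m' hrd hl
      rw [hqe]
      exact loc_of_sum d0 s0 N hNs l m' hrd hl
    obtain ⟨R₀, hR₀⟩ := finsupp_bound h
    have heqL : ∀ l, Rd l → R₀ ≤ l.length →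
        p (FreeGroup.mk l) + q (FreeGroup.mk l)
          = p (FreeGroup.mk (lm lA l)) + q (FreeGroup.mk (lm lB l)) := by
      intro l hrd hlen
      have h0 := hR₀ (FreeGroup.mk l) (by rw [wl_mk_rd hrd]; exact hlen)
      simp only [Pi.sub_apply, Pi.add_apply] at h0
      have e1 : tr ga p (FreeGroup.mk l) = p (FreeGroup.mk (lm lA l)) := by
        show p (ga⁻¹ * FreeGroup.mk l) = _
        rw [ga_inv_mul]
      have e2 : tr gb q (FreeGroup.mk l) = q (FreeGroup.mk (lm lB l)) := by
        show q (gb⁻¹ * FreeGroup.mk l) = _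
        rw [gb_inv_mul]
      rw [e1, e2] at h0
      linarith
    obtain ⟨k₀, hk⟩ := core (P := fun l => p (FreeGroup.mk l))
      (Q := fun l => q (FreeGroup.mk l)) (N := N) (R := R₀) hN1 locp locq heqL
    have locp' : ∀ l m' : L2, Rd (l ++ m') → N ≤ l.length →
        q (FreeGroup.mk (φL (l ++ m'))) = q (FreeGroup.mk (φL l)) := by
      intro l m' hrd hl
      rw [φL_append]
      exact locq _ _ (by rw [← φL_append]; exact rd_φL hrd) (by simpa using hl)
    have locq' : ∀ l m' : L2, Rd (l ++ m') → N ≤ l.length →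
        p (FreeGroup.mk (φL (l ++ m'))) = p (FreeGroup.mk (φL l)) := by
      intro l m' hrd hl
      rw [φL_append]
      exact locp _ _ (by rw [← φL_append]; exact rd_φL hrd) (by simpa using hl)
    have heq' : ∀ l, Rd l → R₀ ≤ l.length →
        q (FreeGroup.mk (φL l)) + p (FreeGroup.mk (φL l))
          = q (FreeGroup.mk (φL (lm lA l))) + p (FreeGroup.mk (φL (lm lB l))) := by
      intro l hrd hlen
      have h0 := heqL (φL l) (rd_φL hrd) (by simpa using hlen)
      have e1 : lm lA (φL l) = φL (lm lB l) := by
        rw [← φp_lA, lm_φL]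
      have e2 : lm lB (φL l) = φL (lm lA l) := by
        rw [← φp_lB, lm_φL]
      rw [e1, e2] at h0
      linarith
    obtain ⟨n₀, hn⟩ := core (P := fun l => q (FreeGroup.mk (φL l)))
      (Q := fun l => p (FreeGroup.mk (φL l))) (N := N) (R := R₀) hN1 locp' locq' heq'
    have hqconst : ∀ x : F₂, R₀ + N + 2 ≤ wl x → q x = k₀ := by
      intro x hx
      have := hk x.toWord (rd_toWord x) hx
      simpa [FreeGroup.mk_toWord] using this
    have hpconst : ∀ x : F₂, R₀ + N + 2 ≤ wl x → p x = n₀ := by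
      intro x hx
      have := hn (φL x.toWord) (rd_φL (rd_toWord x)) (by simpa [wl] using hx)
      rw [φL_φL] at this
      simpa [FreeGroup.mk_toWord] using this
    refine ⟨n₀, k₀, ?_, ?_⟩
    · refine Set.Finite.subset (ball_finite (R₀ + N + 2)) ?_
      intro x hx
      simp only [Function.mem_support] at hx
      by_contra hxx
      simp only [Set.mem_setOf_eq, not_le] at hxx
      apply hx
      have hpx : p x = n₀ := hpconst x (by omega)
      simp [hpx]
    · refine Set.Finite.subset (ball_finite (R₀ + N + 2)) ?_
      intro x hx
      simp only [Function.mem_support] at hx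
      by_contra hxx
      simp only [Set.mem_setOf_eq, not_le] at hxx
      apply hx
      have hqx : q x = k₀ := hqconst x (by omega)
      simp [hqx]
  · rintro ⟨n₀, k₀, h1, h2⟩
    have key : ∀ x : F₂, ((p + q) - (tr ga p + tr gb q)) x
        = (p - n₀ • (1 : F₂ → ℤ)) x + (q - k₀ • (1 : F₂ → ℤ)) x
          - (p - n₀ • (1 : F₂ → ℤ)) (ga⁻¹ * x) - (q - k₀ • (1 : F₂ → ℤ)) (gb⁻¹ * x) := by
      intro x
      simp only [Pi.sub_apply, Pi.add_apply, Pi.smul_apply, Pi.one_apply, tr]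
      ring
    refine Set.Finite.subset (Set.Finite.union (Set.Finite.union h1 h2)
      (Set.Finite.union (h1.image (fun y => ga * y)) (h2.image (fun y => gb * y)))) ?_
    intro x hx
    simp only [Function.mem_support] at hx
    by_contra hxx
    simp only [Set.mem_union, not_or] at hxx
    obtain ⟨⟨m1, m2⟩, m3, m4⟩ := hxx
    apply hx
    rw [key x]
    have z1 : (p - n₀ • (1 : F₂ → ℤ)) x = 0 := Function.notMem_support.1 m1
    have z2 : (q - k₀ • (1 : F₂ → ℤ)) x = 0 := Function.notMem_support.1 m2
    have z3 : (p - n₀ • (1 : F₂ → ℤ)) (ga⁻¹ * x) = 0 := by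
      apply Function.notMem_support.1
      intro hc
      exact m3 ⟨ga⁻¹ * x, hc, mul_inv_cancel_left ga x⟩
    have z4 : (q - k₀ • (1 : F₂ → ℤ)) (gb⁻¹ * x) = 0 := by
      apply Function.notMem_support.1
      intro hc
      exact m4 ⟨gb⁻¹ * x, hc, mul_inv_cancel_left gb x⟩
    rw [z1, z2, z3, z4]
    ring
end

section
/- Let Q be the quotient of the abelian group of all functions F₂ → ℤ (under pointwise addition) by the subgroup of finitely supported functions, and write [f] for the class of f in Q. Let H be the subgroup of Q generated by {[1_{B(t)}] : t ∈ F₂, t ≠ e}, and let Σ be the subgroup of Q generated by {[1_{B(t)}] − [a·1_{B(t)}] : t ∈ F₂, t ≠ e} ∪ {[1_{B(t)}] − [b·1_{B(t)}] : t ∈ F₂, t ≠ e}. Then Σ ⊆ H, and the quotient group H/Σ is free abelian of rank 2; in fact, the images of [1_{B(a)}] and [1_{B(b)}] form a ℤ-basis of H/Σ. -/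
open scoped Pointwise

/-- The subgroup of finitely supported functions `F₂ → ℤ`. -/
def finSuppSubgroup : AddSubgroup (F₂ → ℤ) where
  carrier := {f | (Function.support f).Finite}
  zero_mem' := by simp
  add_mem' := fun hf hg => ((hf.union hg).subset (Function.support_add _ _))
  neg_mem' := fun hf => by simpa using hf

/-- `Q`, the group of functions `F₂ → ℤ` modulo finitely supported functions. -/
abbrev Q := (F₂ → ℤ) ⧸ finSuppSubgroup

/-- The class `[f]` of a function in `Q`. -/
def cls (f : F₂ → ℤ) : Q := QuotientAddGroup.mk f

/-- `H`, the subgroup of `Q` generated by the classes of indicators of cylinder sets. -/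
noncomputable def Hgrp : AddSubgroup Q :=
  AddSubgroup.closure {x | ∃ t : F₂, t ≠ 1 ∧ x = cls (ind (cyl t))}

/-- `Σ`, the subgroup of `Q` generated by `[1_{B(t)}] − [a·1_{B(t)}]` and
`[1_{B(t)}] − [b·1_{B(t)}]` for `t ≠ e`. -/
noncomputable def Sgrp : AddSubgroup Q :=
  AddSubgroup.closure
    ({x | ∃ t : F₂, t ≠ 1 ∧ x = cls (ind (cyl t)) - cls (tr ga (ind (cyl t)))} ∪
     {x | ∃ t : F₂, t ≠ 1 ∧ x = cls (ind (cyl t)) - cls (tr gb (ind (cyl t)))})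

open FreeGroup List

abbrev Ltr := Bool × Bool

def IsRed (l : List Ltr) : Prop := List.Chain' (fun p q => ¬(p.1 = q.1 ∧ p.2 = !q.2)) l

lemma isRed_iff {l : List Ltr} : IsRed l ↔ reduce l = l := by
  induction l with
  | nil => simp [IsRed, List.Chain']
  | cons x l ih =>
    constructor
    · intro h
      have hl : IsRed l := h.tail
      have hrl : reduce l = l := ih.mp hl
      rw [reduce.cons, hrl]
      cases l with
      | nil => rfl
      | cons hd tl =>
        have hx : ¬(x.1 = hd.1 ∧ x.2 = !hd.2) := (List.isChain_cons_cons.mp h).1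
        simp [hx]
    · intro h
      have hlen : (reduce l).length ≤ l.length := (reduce.red (L := l)).length_le
      have hrl : reduce l = l := by
        rw [reduce.cons] at h
        cases hr : reduce l with
        | nil =>
          rw [hr] at h
          have : l = [] := by
            cases l with
            | nil => rfl
            | cons hd tl => exact absurd (congrArg List.length h) (by simp)
          rw [this, hr.symm, this]
        | cons hd tl =>
          rw [hr] at h
          dsimp only at h
          by_cases hc : x.1 = hd.1 ∧ x.2 = !hd.2
          · rw [if_pos hc] at h
            exfalso
            have h2 : tl.length ≤ l.length := by
              have := hlen; rw [hr] at this; simp at this; omega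
            rw [h] at h2
            simp at h2
          · rw [if_neg hc] at h
            exact (List.cons.injEq _ _ _ _).mp h |>.2
      rw [reduce.cons, hrl] at h
      cases l with
      | nil => exact List.isChain_singleton x
      | cons hd tl =>
        dsimp only at h
        by_cases hc : x.1 = hd.1 ∧ x.2 = !hd.2
        · rw [if_pos hc] at h
          exfalso
          have := congrArg List.length h
          simp at this
          omega
        · exact List.isChain_cons_cons.mpr ⟨hc, ih.mpr hrl⟩

lemma toWord_isRed (x : F₂) : IsRed x.toWord := isRed_iff.mpr (reduce_toWord x)

lemma toWord_mk_self {l : List Ltr} (h : IsRed l) : (FreeGroup.mk l).toWord = l := by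
  rw [toWord_mk, isRed_iff.mp h]

lemma wl_mk {l : List Ltr} (h : IsRed l) : wl (FreeGroup.mk l) = l.length := by
  rw [wl, toWord_mk_self h]

lemma isRed_of_append_right {l r : List Ltr} (h : IsRed (l ++ r)) : IsRed r :=
  List.IsChain.suffix h (List.suffix_append l r)

lemma mem_cyl_iff {t x : F₂} : x ∈ cyl t ↔ t.toWord <+: x.toWord := by
  constructor
  · rintro ⟨y, rfl, hlen⟩
    have h1 : t * y = FreeGroup.mk (t.toWord ++ y.toWord) := by
      rw [← FreeGroup.mul_mk, mk_toWord, mk_toWord]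
    have h2 : (t * y).toWord <+ t.toWord ++ y.toWord := by
      rw [h1, toWord_mk]
      exact (reduce.red).sublist
    have h3 : (t * y).toWord = t.toWord ++ y.toWord := by
      apply h2.eq_of_length
      simpa [wl] using hlen
    rw [h3]; exact List.prefix_append _ _
  · rintro ⟨r, hr⟩
    have hred : IsRed (t.toWord ++ r) := by rw [hr]; exact toWord_isRed x
    have hredr : IsRed r := isRed_of_append_right hred
    refine ⟨FreeGroup.mk r, ?_, ?_⟩
    · rw [← mk_toWord (x := x), ← hr, ← FreeGroup.mul_mk, mk_toWord]
    · rw [wl, ← hr]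
      simp [wl_mk hredr, wl, hr.symm, isRed_iff.mp hredr]

lemma toWord_letter_mul (i s : Bool) (z : F₂) :
    (FreeGroup.mk [(i,s)] * z).toWord =
      if z.toWord.head? = some (i, !s) then z.toWord.tail else (i,s) :: z.toWord := by
  have h1 : FreeGroup.mk [(i,s)] * z = FreeGroup.mk ((i,s) :: z.toWord) := by
    rw [← mk_toWord (x := z), FreeGroup.mul_mk, mk_toWord]; rfl
  rw [h1, toWord_mk, reduce.cons, reduce_toWord]
  cases hz : z.toWord with
  | nil => simp
  | cons hd tl =>
    by_cases hc : (i,s).1 = hd.1 ∧ (i,s).2 = !hd.2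
    · have : hd = (i, !s) := by
        obtain ⟨h1', h2'⟩ := hc
        cases hd; simp_all
      simp [this]
    · have : ¬ hd = (i, !s) := by
        intro he; apply hc; rw [he]; simp
      simp [hc, this]

/-! ### Stage 2: letters, eps, set identities -/

def ltr (p : Ltr) : F₂ := FreeGroup.mk [p]

def inv2 (p : Ltr) : Ltr := (p.1, !p.2)

lemma isRed_singleton (p : Ltr) : IsRed [p] := List.isChain_singleton p

lemma toWord_ltr (p : Ltr) : (ltr p).toWord = [p] := toWord_mk_self (isRed_singleton p)

lemma ltr_ne_one (p : Ltr) : ltr p ≠ 1 := by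
  intro h
  have := toWord_ltr p
  rw [h, toWord_one] at this
  simp at this

lemma ltr_inv (p : Ltr) : (ltr p)⁻¹ = ltr (inv2 p) := by
  rw [← toWord_inj, toWord_inv, toWord_ltr, toWord_ltr]
  simp [FreeGroup.invRev, inv2]

lemma inv2_inv2 (p : Ltr) : inv2 (inv2 p) = p := by simp [inv2]

lemma ga_eq : ga = ltr (true, true) := rfl
lemma gb_eq : gb = ltr (false, true) := rfl

def eps2 (p : Ltr) : ℤ × ℤ :=
  if p.1 then ((if p.2 then 1 else -1 : ℤ), 0) else (0, (if p.2 then 1 else -1 : ℤ))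

def epsw (l : List Ltr) : ℤ × ℤ := (l.getLast?).elim 0 eps2

def epsF (t : F₂) : ℤ × ℤ := epsw t.toWord

lemma eps2_inv2 (p : Ltr) : eps2 (inv2 p) = - eps2 p := by
  rcases p with ⟨i, s⟩
  cases i <;> cases s <;> simp [eps2, inv2, Prod.ext_iff]

lemma eps2_sum : eps2 (true, true) + eps2 (true, false) + eps2 (false, true)
    + eps2 (false, false) = 0 := by
  simp [eps2, Prod.ext_iff]

lemma singleton_prefix_iff {a : Ltr} {l : List Ltr} : [a] <+: l ↔ l.head? = some a := by
  cases l with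
  | nil => simp
  | cons hd tl =>
    rw [List.cons_prefix_cons]
    simp [eq_comm]

lemma mem_cyl_ltr_iff {p : Ltr} {x : F₂} : x ∈ cyl (ltr p) ↔ x.toWord.head? = some p := by
  rw [mem_cyl_iff, toWord_ltr, singleton_prefix_iff]

lemma isRed_cons_head {p : Ltr} {l : List Ltr} (h : IsRed (p :: l)) :
    l.head? ≠ some (inv2 p) := by
  cases l with
  | nil => simp
  | cons hd tl =>
    intro he
    simp at he
    have := (List.isChain_cons_cons.mp h).1
    apply this
    rw [he]
    simp [inv2]

lemma tr_ind (g : F₂) (S : Set F₂) :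
    tr g (ind S) = ind {x | g⁻¹ * x ∈ S} := by
  funext x
  by_cases h : g⁻¹ * x ∈ S <;>
    simp [tr, ind, Set.indicator_apply, h]

lemma toWord_ltr_mul (p : Ltr) (z : F₂) :
    (ltr p * z).toWord =
      if z.toWord.head? = some (inv2 p) then z.toWord.tail else p :: z.toWord := by
  have := toWord_letter_mul p.1 p.2 z
  exact this

lemma prefix_shift (p : Ltr) (T X : List Ltr) (hTred : IsRed T) (hXred : IsRed X)
    (hTne : T ≠ []) (hne : (if T.head? = some (inv2 p) then T.tail else p :: T) ≠ []) :
    (T <+: (if X.head? = some p then X.tail else inv2 p :: X)) ↔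
      ((if T.head? = some (inv2 p) then T.tail else p :: T) <+: X) := by
  by_cases hTh : T.head? = some (inv2 p)
  · obtain ⟨tt, rfl⟩ := List.head?_eq_some_iff.mp hTh
    rw [if_pos hTh] at hne ⊢
    simp only [List.tail_cons] at hne ⊢
    have htthead : tt.head? ≠ some p := by
      have := isRed_cons_head hTred
      rwa [inv2_inv2] at this
    by_cases hXh : X.head? = some p
    · obtain ⟨xt, rfl⟩ := List.head?_eq_some_iff.mp hXh
      rw [if_pos hXh]
      simp only [List.tail_cons]
      have hxt : xt.head? ≠ some (inv2 p) := isRed_cons_head hXred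
      constructor
      · intro h
        exact absurd (List.head?_eq_some_iff.mpr
          (by rcases h with ⟨r, hr⟩; exact ⟨tt ++ r, by rw [← hr]; rfl⟩)) hxt
      · intro h
        exfalso
        obtain ⟨c, l, rfl⟩ := List.exists_cons_of_ne_nil hne
        rw [List.cons_prefix_cons] at h
        exact htthead (by rw [List.head?_cons, h.1])
    · rw [if_neg hXh, List.cons_prefix_cons]
      simp
  · rw [if_neg hTh] at hne ⊢
    by_cases hXh : X.head? = some p
    · obtain ⟨xt, rfl⟩ := List.head?_eq_some_iff.mp hXh
      rw [if_pos hXh]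
      simp only [List.tail_cons]
      rw [List.cons_prefix_cons]
      simp
    · rw [if_neg hXh]
      constructor
      · intro h
        exfalso
        apply hTh
        obtain ⟨c, tt, rfl⟩ := List.exists_cons_of_ne_nil hTne
        rw [List.cons_prefix_cons] at h
        rw [List.head?_cons, h.1]
      · intro h
        exact absurd (List.head?_eq_some_iff.mpr
          (by rcases h with ⟨r, hr⟩; exact ⟨T ++ r, by rw [← hr]; rfl⟩)) hXh

lemma smul_cyl {p : Ltr} {t : F₂} (ht : t ≠ 1) (hpt : ltr p * t ≠ 1) :
    {x | (ltr p)⁻¹ * x ∈ cyl t} = cyl (ltr p * t) := by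
  ext x
  simp only [Set.mem_setOf_eq]
  rw [ltr_inv, mem_cyl_iff, mem_cyl_iff, toWord_ltr_mul, toWord_ltr_mul, inv2_inv2]
  have hTne : t.toWord ≠ [] := fun h => ht (toWord_eq_nil_iff.mp h)
  have hne : (if t.toWord.head? = some (inv2 p) then t.toWord.tail else p :: t.toWord) ≠ [] := by
    rw [← toWord_ltr_mul]
    exact fun h => hpt (toWord_eq_nil_iff.mp h)
  exact prefix_shift p t.toWord x.toWord (toWord_isRed t) (toWord_isRed x) hTne hne

lemma smul_cyl_compl (p : Ltr) :
    {x | (ltr p)⁻¹ * x ∈ cyl ((ltr p)⁻¹)} = (cyl (ltr p))ᶜ := by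
  ext x
  simp only [Set.mem_setOf_eq, Set.mem_compl_iff]
  rw [ltr_inv, mem_cyl_ltr_iff, mem_cyl_ltr_iff, toWord_ltr_mul, inv2_inv2]
  by_cases hXh : x.toWord.head? = some p
  · rw [if_pos hXh]
    constructor
    · intro h
      exfalso
      cases hX : x.toWord with
      | nil => rw [hX] at hXh; simp at hXh
      | cons xh xt =>
        rw [hX] at hXh h
        simp at hXh
        subst hXh
        have := isRed_cons_head (hX ▸ toWord_isRed x)
        simp at h
        exact this h
    · intro h
      exact absurd hXh h
  · rw [if_neg hXh]
    simp [hXh]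

lemma epsF_ltr_mul (p : Ltr) (t : F₂) (ht : t ≠ 1) (hpt : ltr p * t ≠ 1) :
    epsF (ltr p * t) = epsF t := by
  rw [epsF, epsF, toWord_ltr_mul]
  have hTne : t.toWord ≠ [] := fun h => ht (toWord_eq_nil_iff.mp h)
  by_cases hTh : t.toWord.head? = some (inv2 p)
  · rw [if_pos hTh]
    have hne : t.toWord.tail ≠ [] := by
      have := fun h => hpt (toWord_eq_nil_iff.mp h)
      rw [toWord_ltr_mul, if_pos hTh] at this
      · exact this
    cases hX : t.toWord with
    | nil => exact absurd hX hTne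
    | cons c l =>
      rw [hX] at hne
      simp only [List.tail_cons] at hne ⊢
      cases l with
      | nil => exact absurd rfl hne
      | cons c' l' => rw [epsw, epsw, List.getLast?_cons_cons]
  · rw [if_neg hTh]
    cases hX : t.toWord with
    | nil => exact absurd hX hTne
    | cons c l => rw [epsw, epsw, List.getLast?_cons_cons]

/-! ### Stage 3: sphere sums -/

open scoped Classical

def allLists : ℕ → Finset (List Ltr)
  | 0 => {[]}
  | n+1 => ((Finset.univ : Finset Ltr) ×ˢ allLists n).image (fun q => q.2 ++ [q.1])

lemma mem_allLists {n : ℕ} {l : List Ltr} : l ∈ allLists n ↔ l.length = n := by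
  induction n generalizing l with
  | zero => simp [allLists, List.length_eq_zero_iff]
  | succ n ih =>
    simp only [allLists, Finset.mem_image, Finset.mem_product, Finset.mem_univ, true_and]
    constructor
    · rintro ⟨⟨s, m⟩, hm, rfl⟩
      simp [ih.mp hm]
    · intro hl
      have hne : l ≠ [] := by intro h; rw [h] at hl; simp at hl
      refine ⟨⟨l.getLast hne, l.dropLast⟩, ?_, ?_⟩
      · apply ih.mpr
        rw [List.length_dropLast, hl]
        omega
      · exact List.dropLast_append_getLast hne

noncomputable def sphere (n : ℕ) : Finset (List Ltr) := (allLists n).filter IsRed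

lemma mem_sphere {n : ℕ} {l : List Ltr} : l ∈ sphere n ↔ l.length = n ∧ IsRed l := by
  simp [sphere, mem_allLists, Finset.mem_filter]

noncomputable def sig (f : F₂ → ℤ) (n : ℕ) : ℤ × ℤ :=
  ∑ l ∈ sphere n, f (FreeGroup.mk l) • epsw l

lemma sig_add (f g : F₂ → ℤ) (n : ℕ) : sig (f + g) n = sig f n + sig g n := by
  simp [sig, add_smul, Finset.sum_add_distrib]

lemma sig_finsupp {f : F₂ → ℤ} (hf : f ∈ finSuppSubgroup) :
    ∃ N, ∀ n, N ≤ n → sig f n = 0 := by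
  have hf' : (Function.support f).Finite := hf
  refine ⟨(hf'.toFinset.sup wl) + 1, fun n hn => ?_⟩
  apply Finset.sum_eq_zero
  intro l hl
  obtain ⟨hlen, hred⟩ := mem_sphere.mp hl
  have hz : f (FreeGroup.mk l) = 0 := by
    by_contra hz
    have hmem : FreeGroup.mk l ∈ hf'.toFinset := by
      simp [Function.mem_support, hz]
    have := Finset.le_sup (f := wl) hmem
    rw [wl_mk hred, hlen] at this
    omega
  rw [hz, zero_smul]

/-- The prefix-filtered sphere. -/
noncomputable def cylSlice (t : F₂) (n : ℕ) : Finset (List Ltr) :=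
  (sphere n).filter (fun l => t.toWord <+: l)

lemma sig_ind_cyl (t : F₂) (n : ℕ) :
    sig (ind (cyl t)) n = ∑ l ∈ cylSlice t n, epsw l := by
  rw [cylSlice, Finset.sum_filter, sig]
  apply Finset.sum_congr rfl
  intro l hl
  obtain ⟨hlen, hred⟩ := mem_sphere.mp hl
  by_cases h : t.toWord <+: l
  · rw [if_pos h]
    have : FreeGroup.mk l ∈ cyl t := mem_cyl_iff.mpr (by rwa [toWord_mk_self hred])
    simp [ind, Set.indicator_of_mem this]
  · rw [if_neg h]
    have : FreeGroup.mk l ∉ cyl t := fun hc => h (by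
      have := mem_cyl_iff.mp hc
      rwa [toWord_mk_self hred] at this)
    simp [ind, Set.indicator_of_notMem this]

lemma eps2_total : ∑ s : Ltr, eps2 s = 0 := by
  rw [Fintype.sum_prod_type]
  simp [Fintype.sum_bool, eps2, Prod.ext_iff]

lemma sum_ok {m : List Ltr} (hred : IsRed m) (hne : m ≠ []) :
    ∑ s ∈ Finset.univ.filter (fun s => IsRed (m ++ [s])), eps2 s = epsw m := by
  set q := m.getLast hne with hq
  have hq' : m.getLast? = some q := List.getLast?_eq_getLast hne
  have hfil : Finset.univ.filter (fun s => IsRed (m ++ [s]))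
      = Finset.univ.filter (fun s => s ≠ inv2 q) := by
    apply Finset.filter_congr
    intro s _
    simp only [IsRed, List.Chain', List.isChain_append, List.isChain_singleton, true_and]
    constructor
    · rintro ⟨_, h⟩ rfl
      exact h q hq' (inv2 q) rfl ⟨rfl, by simp [inv2]⟩
    · intro hs
      refine ⟨hred, ?_⟩
      rintro x hx y hy
      simp only [List.head?_cons, Option.mem_def, Option.some.injEq] at hy
      rw [hq'] at hx
      simp only [Option.mem_def, Option.some.injEq] at hx
      subst hx; subst hy
      rintro ⟨h1, h2⟩
      exact hs (Prod.ext h1.symm (by simp only [inv2]; rw [h2, Bool.not_not]))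
  rw [hfil, Finset.filter_ne', Finset.sum_erase_eq_sub (Finset.mem_univ _)]
  rw [eps2_inv2]
  have : ∑ s : Ltr, eps2 s = 0 := eps2_total
  rw [this]
  simp [epsw, hq']

lemma cylSlice_base {t : F₂} (ht : t ≠ 1) : cylSlice t (wl t) = {t.toWord} := by
  ext l
  simp only [cylSlice, Finset.mem_filter, mem_sphere, Finset.mem_singleton]
  constructor
  · rintro ⟨⟨hlen, _⟩, hpre⟩
    exact (hpre.eq_of_length (by rw [hlen]; rfl)).symm
  · rintro rfl
    exact ⟨⟨rfl, toWord_isRed t⟩, List.prefix_refl _⟩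

lemma cylSlice_step {t : F₂} (ht : t ≠ 1) {n : ℕ} (hn : wl t ≤ n) :
    ∑ l ∈ cylSlice t (n+1), epsw l = ∑ l ∈ cylSlice t n, epsw l := by
  have htne : t.toWord ≠ [] := fun h => ht (toWord_eq_nil_iff.mp h)
  have htlen : 1 ≤ wl t := by
    rw [wl]
    cases h : t.toWord with
    | nil => exact absurd h htne
    | cons a l => simp
  have key : ∑ l ∈ cylSlice t (n+1), epsw l
      = ∑ m ∈ (cylSlice t n).sigma
          (fun m => Finset.univ.filter (fun s => IsRed (m ++ [s]))), eps2 m.2 := by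
    apply Finset.sum_bij'
      (i := fun l _ => (⟨l.dropLast, (l.getLast?).getD (true, true)⟩ : Σ _ : List Ltr, Ltr))
      (j := fun m _ => m.1 ++ [m.2])
    · -- hi
      intro l hl
      obtain ⟨hsp, hpre⟩ := Finset.mem_filter.mp hl
      obtain ⟨hlen, hred⟩ := mem_sphere.mp hsp
      have hlne : l ≠ [] := by intro h; rw [h] at hlen; simp at hlen
      have hq' : l.getLast? = some (l.getLast hlne) := List.getLast?_eq_getLast hlne
      have hrecon : l.dropLast ++ [(l.getLast?).getD (true, true)] = l := by
        rw [hq']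
        exact List.dropLast_append_getLast? _ (by rw [hq']; rfl)
      rw [Finset.mem_sigma]
      constructor
      · rw [cylSlice, Finset.mem_filter, mem_sphere]
        refine ⟨⟨by rw [List.length_dropLast, hlen]; omega, hred.prefix l.dropLast_prefix⟩, ?_⟩
        apply List.prefix_of_prefix_length_le hpre l.dropLast_prefix
        rw [List.length_dropLast, hlen]
        have : (toWord t).length = wl t := rfl
        omega
      · rw [Finset.mem_filter]
        refine ⟨Finset.mem_univ _, ?_⟩
        rw [hrecon]
        exact hred
    · -- hj
      rintro ⟨m, s⟩ hm
      rw [Finset.mem_sigma] at hm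
      obtain ⟨hm1, hm2⟩ := hm
      obtain ⟨hsp, hpre⟩ := Finset.mem_filter.mp hm1
      obtain ⟨hlen, _⟩ := mem_sphere.mp hsp
      have hred2 : IsRed (m ++ [s]) := (Finset.mem_filter.mp hm2).2
      rw [cylSlice, Finset.mem_filter, mem_sphere]
      refine ⟨⟨by simp [hlen], hred2⟩, hpre.trans (List.prefix_append _ _)⟩
    · -- left_inv
      intro l hl
      obtain ⟨hsp, _⟩ := Finset.mem_filter.mp hl
      obtain ⟨hlen, _⟩ := mem_sphere.mp hsp
      have hlne : l ≠ [] := by intro h; rw [h] at hlen; simp at hlen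
      have hq' : l.getLast? = some (l.getLast hlne) := List.getLast?_eq_getLast hlne
      simp only []
      rw [hq']
      exact List.dropLast_append_getLast? _ (by rw [hq']; rfl)
    · -- right_inv
      rintro ⟨m, s⟩ _
      simp [List.dropLast_concat, List.getLast?_concat]
    · -- values
      intro l hl
      obtain ⟨hsp, _⟩ := Finset.mem_filter.mp hl
      obtain ⟨hlen, _⟩ := mem_sphere.mp hsp
      have hlne : l ≠ [] := by intro h; rw [h] at hlen; simp at hlen
      have hq' : l.getLast? = some (l.getLast hlne) := List.getLast?_eq_getLast hlne
      simp [epsw, hq']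
  rw [key, Finset.sum_sigma]
  apply Finset.sum_congr rfl
  intro m hm
  obtain ⟨hsp, _⟩ := Finset.mem_filter.mp hm
  obtain ⟨hlen, hred⟩ := mem_sphere.mp hsp
  have hmne : m ≠ [] := by
    intro h; rw [h] at hlen; simp at hlen; omega
  exact sum_ok hred hmne

lemma sig_cyl {t : F₂} (ht : t ≠ 1) : ∀ n, wl t ≤ n → sig (ind (cyl t)) n = epsF t := by
  intro n hn
  induction n, hn using Nat.le_induction with
  | base =>
    rw [sig_ind_cyl, cylSlice_base ht]
    simp [epsF]
  | succ n hn ih =>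
    rw [sig_ind_cyl, cylSlice_step ht hn, ← sig_ind_cyl, ih]

/-! ### Stage 4: the homomorphism ψ and the main theorem -/

def evZero : AddSubgroup (ℕ → ℤ × ℤ) where
  carrier := {u | ∃ N, ∀ n, N ≤ n → u n = 0}
  zero_mem' := ⟨0, fun _ _ => rfl⟩
  add_mem' := by
    rintro u v ⟨N, hN⟩ ⟨M, hM⟩
    exact ⟨max N M, fun n hn => by
      simp [Pi.add_apply, hN n (le_trans (le_max_left _ _) hn),
        hM n (le_trans (le_max_right _ _) hn)]⟩
  neg_mem' := by
    rintro u ⟨N, hN⟩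
    exact ⟨N, fun n hn => by simp [hN n hn]⟩

abbrev G2 := (ℕ → ℤ × ℤ) ⧸ evZero

noncomputable def SigHom : (F₂ → ℤ) →+ (ℕ → ℤ × ℤ) where
  toFun f := fun n => sig f n
  map_zero' := funext fun n => by simp [sig]
  map_add' f g := funext fun n => sig_add f g n

noncomputable def psi : Q →+ G2 :=
  QuotientAddGroup.map _ _ SigHom (fun f hf => by
    obtain ⟨N, hN⟩ := sig_finsupp hf
    exact ⟨N, fun n hn => hN n hn⟩)

lemma psi_cls (f : F₂ → ℤ) :
    psi (cls f) = QuotientAddGroup.mk (fun n => sig f n) := rfl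

noncomputable def cG : ℤ × ℤ →+ G2 :=
  (QuotientAddGroup.mk' evZero).comp
    { toFun := fun c => (fun _ => c), map_zero' := rfl, map_add' := fun _ _ => rfl }

lemma cG_apply (c : ℤ × ℤ) : cG c = QuotientAddGroup.mk (fun _ => c) := rfl

lemma cG_inj {c : ℤ × ℤ} (h : cG c = 0) : c = 0 := by
  have hm : (fun _ : ℕ => c) ∈ evZero := by
    have := (QuotientAddGroup.eq_zero_iff (fun _ : ℕ => c)).mp h
    exact this
  obtain ⟨N, hN⟩ := hm
  exact hN N le_rfl

lemma psi_cyl {t : F₂} (ht : t ≠ 1) : psi (cls (ind (cyl t))) = cG (epsF t) := by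
  rw [psi_cls, cG_apply]
  rw [QuotientAddGroup.eq]
  refine ⟨wl t, fun n hn => ?_⟩
  simp [Pi.add_apply, sig_cyl ht n hn]

lemma epsF_ltr (p : Ltr) : epsF (ltr p) = eps2 p := by
  simp [epsF, toWord_ltr, epsw]

lemma ind_val (S : Set F₂) (x : F₂) : ind S x = if x ∈ S then 1 else 0 :=
  Set.indicator_apply _ _ _

lemma cls_sub (f g : F₂ → ℤ) : cls (f - g) = cls f - cls g := rfl

lemma cls_add (f g : F₂ → ℤ) : cls (f + g) = cls f + cls g := rfl

lemma ind_compl (S : Set F₂) : ind Sᶜ = ind Set.univ - ind S := by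
  funext x
  by_cases h : x ∈ S <;> simp [ind_val, h]

lemma indPartition : ind (Set.univ : Set F₂) =
    ind (cyl (ltr (true, true))) + ind (cyl (ltr (true, false))) +
    ind (cyl (ltr (false, true))) + ind (cyl (ltr (false, false))) +
    ind ({1} : Set F₂) := by
  funext x
  simp only [Pi.add_apply, ind_val, mem_cyl_ltr_iff, Set.mem_univ, if_true,
    Set.mem_singleton_iff]
  cases hX : x.toWord with
  | nil =>
    have hx1 : x = 1 := toWord_eq_nil_iff.mp hX
    simp [hX, hx1]
  | cons hd tl =>
    have hx1 : x ≠ 1 := by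
      intro h
      rw [h, toWord_one] at hX
      exact absurd hX (by simp)
    rcases hd with ⟨i, s⟩
    cases i <;> cases s <;> simp [hX, hx1]

lemma cls_ind_one : cls (ind ({1} : Set F₂)) = 0 := by
  apply (QuotientAddGroup.eq_zero_iff _).mpr
  show (Function.support (ind ({1} : Set F₂))).Finite
  apply Set.Finite.subset (Set.finite_singleton (1 : F₂))
  exact Function.support_subset_iff'.mpr fun x hx => by
    simp [ind_val, hx]

lemma psi_ind_univ : psi (cls (ind (Set.univ : Set F₂))) = 0 := by
  rw [indPartition, cls_add, cls_add, cls_add, cls_add, cls_ind_one]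
  rw [map_add, map_add, map_add, map_add]
  rw [psi_cyl (ltr_ne_one _), psi_cyl (ltr_ne_one _), psi_cyl (ltr_ne_one _),
    psi_cyl (ltr_ne_one _)]
  rw [epsF_ltr, epsF_ltr, epsF_ltr, epsF_ltr]
  rw [← map_add, ← map_add, ← map_add, eps2_sum]
  simp

lemma psi_compl (p : Ltr) : psi (cls (ind ((cyl (ltr p))ᶜ))) = cG (- eps2 p) := by
  rw [ind_compl, cls_sub, map_sub, psi_ind_univ, psi_cyl (ltr_ne_one p), epsF_ltr]
  simp

/-- ψ kills the subgroup Σ. -/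
lemma psi_vanish : ∀ x ∈ Sgrp, psi x = 0 := by
  have key : ∀ (p : Ltr) (t : F₂), t ≠ 1 →
      psi (cls (ind (cyl t)) - cls (tr (ltr p) (ind (cyl t)))) = 0 := by
    intro p t ht
    rw [tr_ind]
    by_cases hgt : ltr p * t = 1
    · have ht' : t = (ltr p)⁻¹ := (inv_eq_of_mul_eq_one_right hgt).symm
      subst ht'
      rw [smul_cyl_compl, map_sub, psi_compl, psi_cyl ht, ltr_inv, epsF_ltr, eps2_inv2]
      simp
    · rw [smul_cyl ht hgt, map_sub, psi_cyl ht, psi_cyl hgt,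
        epsF_ltr_mul p t ht hgt]
      simp
  intro x hx
  refine AddSubgroup.closure_induction ?_ ?_ ?_ ?_ hx
  · rintro y (⟨t, ht, rfl⟩ | ⟨t, ht, rfl⟩)
    · exact key (true, true) t ht
    · exact key (false, true) t ht
  · exact map_zero psi
  · intro y z _ _ hy hz
    rw [map_add, hy, hz, add_zero]
  · intro y _ hy
    rw [map_neg, hy, neg_zero]

/-! ### Stage 5: structure of H and Σ -/

lemma step_rel (p : Ltr) (hp : p = (true, true) ∨ p = (false, true)) (t : F₂)
    (ht : t ≠ 1) (hgt : ltr p * t ≠ 1) :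
    cls (ind (cyl t)) - cls (ind (cyl (ltr p * t))) ∈ Sgrp := by
  have hmem : cls (ind (cyl t)) - cls (tr (ltr p) (ind (cyl t))) ∈ Sgrp := by
    apply AddSubgroup.subset_closure
    rcases hp with rfl | rfl
    · left; exact ⟨t, ht, rfl⟩
    · right; exact ⟨t, ht, rfl⟩
  rwa [tr_ind, smul_cyl ht hgt] at hmem

lemma lettersum : cls (ind (Set.univ : Set F₂)) =
    cls (ind (cyl (ltr (true, true)))) + cls (ind (cyl (ltr (true, false)))) +
    cls (ind (cyl (ltr (false, true)))) + cls (ind (cyl (ltr (false, false)))) := by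
  rw [indPartition, cls_add, cls_add, cls_add, cls_add, cls_ind_one, add_zero]

lemma sum_bb' : cls (ind (cyl (ltr (false, true)))) + cls (ind (cyl (ltr (false, false)))) ∈ Sgrp := by
  have h1 : cls (ind (cyl (ltr (true, false)))) -
      cls (tr ga (ind (cyl (ltr (true, false))))) ∈ Sgrp :=
    AddSubgroup.subset_closure (Or.inl ⟨ltr (true, false), ltr_ne_one _, rfl⟩)
  have h2 : (ltr ((true : Bool), (true : Bool)))⁻¹ = ltr (true, false) := by
    rw [ltr_inv]; rfl
  rw [tr_ind, ga_eq, ← h2, smul_cyl_compl, ind_compl, cls_sub, lettersum, h2] at h1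
  have heq : cls (ind (cyl (ltr (false, true)))) + cls (ind (cyl (ltr (false, false)))) =
      -(cls (ind (cyl (ltr (true, false)))) -
        (cls (ind (cyl (ltr (true, true)))) + cls (ind (cyl (ltr (true, false)))) +
         cls (ind (cyl (ltr (false, true)))) + cls (ind (cyl (ltr (false, false)))) -
         cls (ind (cyl (ltr (true, true)))))) := by abel
  rw [heq]
  exact AddSubgroup.neg_mem _ h1

lemma sum_aa' : cls (ind (cyl (ltr (true, true)))) + cls (ind (cyl (ltr (true, false)))) ∈ Sgrp := by
  have h1 : cls (ind (cyl (ltr (false, false)))) -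
      cls (tr gb (ind (cyl (ltr (false, false))))) ∈ Sgrp :=
    AddSubgroup.subset_closure (Or.inr ⟨ltr (false, false), ltr_ne_one _, rfl⟩)
  have h2 : (ltr ((false : Bool), (true : Bool)))⁻¹ = ltr (false, false) := by
    rw [ltr_inv]; rfl
  rw [tr_ind, gb_eq, ← h2, smul_cyl_compl, ind_compl, cls_sub, lettersum, h2] at h1
  have heq : cls (ind (cyl (ltr (true, true)))) + cls (ind (cyl (ltr (true, false)))) =
      -(cls (ind (cyl (ltr (false, false)))) -
        (cls (ind (cyl (ltr (true, true)))) + cls (ind (cyl (ltr (true, false)))) +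
         cls (ind (cyl (ltr (false, true)))) + cls (ind (cyl (ltr (false, false)))) -
         cls (ind (cyl (ltr (false, true)))))) := by abel
  rw [heq]
  exact AddSubgroup.neg_mem _ h1

lemma reduce_to_letter : ∀ n (t : F₂), wl t ≤ n → t ≠ 1 →
    cls (ind (cyl t)) - cls (ind (cyl (ltr (t.toWord.getLast?.getD (true, true))))) ∈ Sgrp := by
  intro n
  induction n with
  | zero =>
    intro t hlen ht
    exfalso
    exact ht (toWord_eq_nil_iff.mp (List.length_eq_zero_iff.mp (Nat.le_zero.mp hlen)))
  | succ n ih =>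
    intro t hlen ht
    cases hX : t.toWord with
    | nil => exact absurd (toWord_eq_nil_iff.mp hX) ht
    | cons hd rest =>
      cases rest with
      | nil =>
        have ht' : t = ltr hd := by rw [← mk_toWord (x := t), hX]; rfl
        rw [ht']
        simp only [List.getLast?_singleton, Option.getD_some]
        rw [sub_self]
        exact Sgrp.zero_mem
      | cons c l =>
        have hredT : IsRed (hd :: c :: l) := hX ▸ toWord_isRed t
        have hreds : IsRed (c :: l) := hredT.tail
        have hsW : (FreeGroup.mk (c :: l)).toWord = c :: l := toWord_mk_self hreds
        have hs1 : FreeGroup.mk (c :: l) ≠ 1 := by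
          intro h
          rw [h, toWord_one] at hsW
          exact absurd hsW (by simp)
        have hwls : wl (FreeGroup.mk (c :: l)) ≤ n := by
          have h1 : wl (FreeGroup.mk (c :: l)) = l.length + 1 := by
            rw [wl, hsW]; simp
          have h2 : wl t = l.length + 2 := by rw [wl, hX]; simp
          omega
        have hGL2 : (hd :: c :: l).getLast?.getD (true, true)
            = (FreeGroup.mk (c :: l)).toWord.getLast?.getD (true, true) := by
          rw [hsW, List.getLast?_cons_cons]
        have ihs := ih (FreeGroup.mk (c :: l)) hwls hs1
        by_cases hpos : hd.2 = true
        · have hdecomp : ltr hd * FreeGroup.mk (c :: l) = t := by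
            rw [ltr, FreeGroup.mul_mk, List.singleton_append, ← hX, mk_toWord]
          have hp : hd = (true, true) ∨ hd = (false, true) := by
            rcases hd with ⟨i, s2⟩
            cases i <;> simp_all
          have hstep := step_rel hd hp (FreeGroup.mk (c :: l)) hs1
            (by rw [hdecomp]; exact ht)
          rw [hdecomp] at hstep
          rw [hGL2]
          have heq : cls (ind (cyl t)) -
              cls (ind (cyl (ltr ((FreeGroup.mk (c :: l)).toWord.getLast?.getD (true, true))))) =
              (cls (ind (cyl (FreeGroup.mk (c :: l)))) -
                cls (ind (cyl (ltr ((FreeGroup.mk (c :: l)).toWord.getLast?.getD (true, true)))))) -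
              (cls (ind (cyl (FreeGroup.mk (c :: l)))) - cls (ind (cyl t))) := by
            abel
          rw [heq]
          exact AddSubgroup.sub_mem _ ihs hstep
        · have hdecomp : ltr (inv2 hd) * t = FreeGroup.mk (c :: l) := by
            rw [ltr, ← mk_toWord (x := t), hX, FreeGroup.mul_mk]
            apply FreeGroup.reduce.exact
            rw [isRed_iff.mp hreds, List.singleton_append, FreeGroup.reduce.cons,
              isRed_iff.mp hredT]
            dsimp only
            rw [if_pos ⟨rfl, by simp [inv2]⟩]
          have hp : inv2 hd = (true, true) ∨ inv2 hd = (false, true) := by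
            rcases hd with ⟨i, s2⟩
            cases i <;> simp_all [inv2]
          have hstep := step_rel (inv2 hd) hp t ht (by rw [hdecomp]; exact hs1)
          rw [hdecomp] at hstep
          rw [hGL2]
          have heq : cls (ind (cyl t)) -
              cls (ind (cyl (ltr ((FreeGroup.mk (c :: l)).toWord.getLast?.getD (true, true))))) =
              (cls (ind (cyl (FreeGroup.mk (c :: l)))) -
                cls (ind (cyl (ltr ((FreeGroup.mk (c :: l)).toWord.getLast?.getD (true, true)))))) +
              (cls (ind (cyl t)) - cls (ind (cyl (FreeGroup.mk (c :: l))))) := by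
            abel
          rw [heq]
          exact AddSubgroup.add_mem _ ihs hstep

lemma letter_decomp (p : Ltr) : ∃ m n : ℤ,
    cls (ind (cyl (ltr p))) -
      (m • cls (ind (cyl ga)) + n • cls (ind (cyl gb))) ∈ Sgrp := by
  rcases p with ⟨i, s⟩
  cases i <;> cases s
  · -- (false, false) : B' ≡ -B
    refine ⟨0, -1, ?_⟩
    have heq : cls (ind (cyl (ltr (false, false)))) -
        ((0 : ℤ) • cls (ind (cyl ga)) + (-1 : ℤ) • cls (ind (cyl gb))) =
        cls (ind (cyl (ltr (false, true)))) + cls (ind (cyl (ltr (false, false)))) := by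
      rw [gb_eq]; simp; abel
    rw [heq]
    exact sum_bb'
  · -- (false, true) = gb
    refine ⟨0, 1, ?_⟩
    have heq : cls (ind (cyl (ltr (false, true)))) -
        ((0 : ℤ) • cls (ind (cyl ga)) + (1 : ℤ) • cls (ind (cyl gb))) = 0 := by
      rw [gb_eq]; simp
    rw [heq]
    exact Sgrp.zero_mem
  · -- (true, false) : A' ≡ -A
    refine ⟨-1, 0, ?_⟩
    have heq : cls (ind (cyl (ltr (true, false)))) -
        ((-1 : ℤ) • cls (ind (cyl ga)) + (0 : ℤ) • cls (ind (cyl gb))) =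
        cls (ind (cyl (ltr (true, true)))) + cls (ind (cyl (ltr (true, false)))) := by
      rw [ga_eq]; simp; abel
    rw [heq]
    exact sum_aa'
  · -- (true, true) = ga
    refine ⟨1, 0, ?_⟩
    have heq : cls (ind (cyl (ltr (true, true)))) -
        ((1 : ℤ) • cls (ind (cyl ga)) + (0 : ℤ) • cls (ind (cyl gb))) = 0 := by
      rw [ga_eq]; simp
    rw [heq]
    exact Sgrp.zero_mem

lemma gen_decomp : ∀ q ∈ Hgrp, ∃ m n : ℤ,
    q - (m • cls (ind (cyl ga)) + n • cls (ind (cyl gb))) ∈ Sgrp := by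
  intro q hq
  refine AddSubgroup.closure_induction ?_ ?_ ?_ ?_ hq
  · rintro x ⟨t, ht, rfl⟩
    have hred := reduce_to_letter (wl t) t le_rfl ht
    obtain ⟨m, n, hmn⟩ := letter_decomp (t.toWord.getLast?.getD (true, true))
    refine ⟨m, n, ?_⟩
    have heq : cls (ind (cyl t)) - (m • cls (ind (cyl ga)) + n • cls (ind (cyl gb))) =
        (cls (ind (cyl t)) -
          cls (ind (cyl (ltr (t.toWord.getLast?.getD (true, true)))))) +
        (cls (ind (cyl (ltr (t.toWord.getLast?.getD (true, true))))) -
          (m • cls (ind (cyl ga)) + n • cls (ind (cyl gb)))) := by abel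
    rw [heq]
    exact AddSubgroup.add_mem _ hred hmn
  · exact ⟨0, 0, by simpa using Sgrp.zero_mem⟩
  · rintro x y _ _ ⟨m1, n1, h1⟩ ⟨m2, n2, h2⟩
    refine ⟨m1 + m2, n1 + n2, ?_⟩
    have heq : x + y - ((m1 + m2) • cls (ind (cyl ga)) + (n1 + n2) • cls (ind (cyl gb))) =
        (x - (m1 • cls (ind (cyl ga)) + n1 • cls (ind (cyl gb)))) +
        (y - (m2 • cls (ind (cyl ga)) + n2 • cls (ind (cyl gb)))) := by
      rw [add_zsmul, add_zsmul]; abel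
    rw [heq]
    exact AddSubgroup.add_mem _ h1 h2
  · rintro x _ ⟨m, n, h⟩
    refine ⟨-m, -n, ?_⟩
    have heq : -x - ((-m) • cls (ind (cyl ga)) + (-n) • cls (ind (cyl gb))) =
        -(x - (m • cls (ind (cyl ga)) + n • cls (ind (cyl gb)))) := by
      rw [neg_zsmul, neg_zsmul]; abel
    rw [heq]
    exact AddSubgroup.neg_mem _ h

lemma S_le_H : Sgrp ≤ Hgrp := by
  have key : ∀ p : Ltr, ∀ t : F₂, t ≠ 1 →
      cls (ind (cyl t)) - cls (tr (ltr p) (ind (cyl t))) ∈ Hgrp := by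
    intro p t ht
    have h1 : cls (ind (cyl t)) ∈ Hgrp := AddSubgroup.subset_closure ⟨t, ht, rfl⟩
    rw [tr_ind]
    by_cases hgt : ltr p * t = 1
    · have ht' : t = (ltr p)⁻¹ := (inv_eq_of_mul_eq_one_right hgt).symm
      subst ht'
      rw [smul_cyl_compl, ind_compl, cls_sub, lettersum]
      refine AddSubgroup.sub_mem _ h1 (AddSubgroup.sub_mem _ ?_ ?_)
      · refine AddSubgroup.add_mem _ (AddSubgroup.add_mem _ (AddSubgroup.add_mem _ ?_ ?_) ?_) ?_ <;>
          exact AddSubgroup.subset_closure ⟨ltr _, ltr_ne_one _, rfl⟩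
      · exact AddSubgroup.subset_closure ⟨ltr p, ltr_ne_one _, rfl⟩
    · rw [smul_cyl ht hgt]
      exact AddSubgroup.sub_mem _ h1 (AddSubgroup.subset_closure ⟨ltr p * t, hgt, rfl⟩)
  apply (AddSubgroup.closure_le _).mpr
  rintro x (⟨t, ht, rfl⟩ | ⟨t, ht, rfl⟩)
  · exact key (true, true) t ht
  · exact key (false, true) t ht

/-! ### Stage 6: main theorem -/

/-- `Σ ⊆ H`, and `H/Σ` is free abelian of rank 2, with the images of `[1_{B(a)}]` and
`[1_{B(b)}]` as a ℤ-basis: there is an isomorphism `H/Σ ≃ ℤ²` sending them to `(1,0)`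
and `(0,1)`. -/
theorem stmt_1 :
    Sgrp ≤ Hgrp ∧
    ∃ φ : (Hgrp ⧸ Sgrp.addSubgroupOf Hgrp) ≃+ ℤ × ℤ,
      (∀ ha : cls (ind (cyl ga)) ∈ Hgrp,
        φ (QuotientAddGroup.mk (⟨cls (ind (cyl ga)), ha⟩ : Hgrp)) = (1, 0)) ∧
      (∀ hb : cls (ind (cyl gb)) ∈ Hgrp,
        φ (QuotientAddGroup.mk (⟨cls (ind (cyl gb)), hb⟩ : Hgrp)) = (0, 1)) := by
  have memA : cls (ind (cyl ga)) ∈ Hgrp :=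
    AddSubgroup.subset_closure ⟨ga, by rw [ga_eq]; exact ltr_ne_one _, rfl⟩
  have memB : cls (ind (cyl gb)) ∈ Hgrp :=
    AddSubgroup.subset_closure ⟨gb, by rw [gb_eq]; exact ltr_ne_one _, rfl⟩
  refine ⟨S_le_H, ?_⟩
  set N := Sgrp.addSubgroupOf Hgrp with hN
  set π : Hgrp →+ Hgrp ⧸ N := QuotientAddGroup.mk' N with hπ
  set Abar := π ⟨cls (ind (cyl ga)), memA⟩ with hAbar
  set Bbar := π ⟨cls (ind (cyl gb)), memB⟩ with hBbar
  set ι : ℤ × ℤ →+ Hgrp ⧸ N :=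
    AddMonoidHom.coprod (P := Hgrp ⧸ N) ((zmultiplesHom _) Abar) ((zmultiplesHom _) Bbar) with hι0
  have hι : ∀ m n : ℤ, ι (m, n) =
      π (m • (⟨cls (ind (cyl ga)), memA⟩ : Hgrp) + n • (⟨cls (ind (cyl gb)), memB⟩ : Hgrp)) := by
    intro m n
    rw [hι0]
    rw [AddMonoidHom.coprod_apply]
    rw [map_add, map_zsmul, map_zsmul]
    rfl
  have psiA : psi (cls (ind (cyl ga))) = cG (1, 0) := by
    rw [psi_cyl (by rw [ga_eq]; exact ltr_ne_one _), ga_eq, epsF_ltr]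
    norm_num [eps2]
  have psiB : psi (cls (ind (cyl gb))) = cG (0, 1) := by
    rw [psi_cyl (by rw [gb_eq]; exact ltr_ne_one _), gb_eq, epsF_ltr]
    norm_num [eps2]
  have hker : ∀ m n : ℤ,
      (m • cls (ind (cyl ga)) + n • cls (ind (cyl gb))) ∈ Sgrp → m = 0 ∧ n = 0 := by
    intro m n hmem
    have h0 : psi (m • cls (ind (cyl ga)) + n • cls (ind (cyl gb))) = 0 := psi_vanish _ hmem
    rw [map_add, map_zsmul, map_zsmul, psiA, psiB,
      ← map_zsmul cG, ← map_zsmul cG, ← map_add cG] at h0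
    have hc := cG_inj h0
    have hmn : m • ((1 : ℤ), (0 : ℤ)) + n • ((0 : ℤ), (1 : ℤ)) = (m, n) := by
      simp [Prod.ext_iff]
    rw [hmn] at hc
    exact ⟨congrArg Prod.fst hc, congrArg Prod.snd hc⟩
  have hinj : Function.Injective ι := by
    rw [injective_iff_map_eq_zero]
    rintro ⟨m, n⟩ h0
    rw [hι] at h0
    have hmem' := (QuotientAddGroup.eq_zero_iff _).mp h0
    rw [AddSubgroup.mem_addSubgroupOf] at hmem'
    have hcoe : ((m • (⟨cls (ind (cyl ga)), memA⟩ : Hgrp)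
        + n • (⟨cls (ind (cyl gb)), memB⟩ : Hgrp) : Hgrp) : Q)
        = m • cls (ind (cyl ga)) + n • cls (ind (cyl gb)) := by
      push_cast
      rfl
    rw [hcoe] at hmem'
    obtain ⟨hm, hn⟩ := hker m n hmem'
    rw [hm, hn]
    rfl
  have hsurj : Function.Surjective ι := by
    intro x
    obtain ⟨u, rfl⟩ := QuotientAddGroup.mk'_surjective N x
    obtain ⟨q, hq⟩ := u
    obtain ⟨m, n, hmn⟩ := gen_decomp q hq
    refine ⟨(m, n), ?_⟩
    rw [hι]
    show QuotientAddGroup.mk _ = QuotientAddGroup.mk _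
    rw [QuotientAddGroup.eq]
    rw [AddSubgroup.mem_addSubgroupOf]
    have hcoe : ((-(m • (⟨cls (ind (cyl ga)), memA⟩ : Hgrp)
        + n • (⟨cls (ind (cyl gb)), memB⟩ : Hgrp)) + ⟨q, hq⟩ : Hgrp) : Q)
        = q - (m • cls (ind (cyl ga)) + n • cls (ind (cyl gb))) := by
      push_cast
      abel
    rw [hcoe]
    exact hmn
  let e := AddEquiv.ofBijective ι ⟨hinj, hsurj⟩
  refine ⟨e.symm, ?_, ?_⟩
  · intro ha
    rw [AddEquiv.symm_apply_eq]
    have he : e ((1 : ℤ), (0 : ℤ)) = ι (1, 0) := rfl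
    rw [he, hι]
    rw [one_zsmul, zero_zsmul, add_zero]
    rfl
  · intro hb
    rw [AddEquiv.symm_apply_eq]
    have he : e ((0 : ℤ), (1 : ℤ)) = ι (0, 1) := rfl
    rw [he, hι]
    rw [one_zsmul, zero_zsmul, zero_add]
    rfl
end

section
/- Let g ∈ F₂ with |g| = 1 (i.e., g is one of the letters a, b, a⁻¹, b⁻¹) and let t ∈ F₂ with t ≠ e. Then: (i) if |g*t| = |t| + 1 then g·B(t) = B(g*t); (ii) if g*t = e then g·B(t) = F₂ \ B(g); (iii) if |g*t| = |t| − 1 and g*t ≠ e then g·B(t) = B(g*t). -/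
open scoped Pointwise

namespace Aux

lemma toWord_mul_eq_append {t y : F₂} (h : wl (t * y) = wl t + wl y) :
    (t * y).toWord = t.toWord ++ y.toWord :=
  (FreeGroup.toWord_mul_sublist t y).eq_of_length (by simpa [wl] using h)

lemma mem_cyl {t x : F₂} : x ∈ cyl t ↔ t.toWord <+: x.toWord := by
  constructor
  · rintro ⟨y, rfl, hlen⟩
    exact ⟨y.toWord, (toWord_mul_eq_append hlen).symm⟩
  · rintro ⟨s, hs⟩
    have hx : x = t * FreeGroup.mk s := by
      rw [← FreeGroup.mk_toWord (x := x), ← hs, ← FreeGroup.mul_mk, FreeGroup.mk_toWord]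
    have h1 : wl x ≤ wl t + wl (FreeGroup.mk s) := by
      have := (FreeGroup.toWord_mul_sublist t (FreeGroup.mk s)).length_le
      simpa [wl, hx] using this
    have h2 : wl (FreeGroup.mk s) ≤ s.length := by
      simpa [wl] using (FreeGroup.Red.sublist (FreeGroup.reduce.red (L := s))).length_le
    have h3 : wl x = t.toWord.length + s.length := by
      rw [wl, ← hs]; simp
    have h4 : wl t = t.toWord.length := rfl
    exact ⟨FreeGroup.mk s, hx, by omega⟩

lemma letter_mul_cancel (p : Bool × Bool) (x : F₂) (tl : List (Bool × Bool))
    (h : x.toWord = (p.1, !p.2) :: tl) :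
    (FreeGroup.mk [p] * x).toWord = tl := by
  conv_lhs => rw [← FreeGroup.mk_toWord (x := x)]
  rw [FreeGroup.mul_mk, FreeGroup.toWord_mk, List.singleton_append, FreeGroup.reduce.cons,
    FreeGroup.reduce_toWord, h]
  simp

lemma letter_mul_cons (p : Bool × Bool) (x : F₂)
    (h : ∀ tl, x.toWord ≠ (p.1, !p.2) :: tl) :
    (FreeGroup.mk [p] * x).toWord = p :: x.toWord := by
  conv_lhs => rw [← FreeGroup.mk_toWord (x := x)]
  rw [FreeGroup.mul_mk, FreeGroup.toWord_mk, List.singleton_append, FreeGroup.reduce.cons,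
    FreeGroup.reduce_toWord]
  cases hx : x.toWord with
  | nil => rfl
  | cons hd tl =>
    simp only []
    rw [if_neg]
    rintro ⟨h1, h2⟩
    exact h tl (by rw [hx]; congr 1; exact Prod.ext h1.symm (by simp [h2]))

lemma no_pair (x : F₂) (L₂ L₃ : List (Bool × Bool)) (a b : Bool)
    (h : x.toWord = L₂ ++ (a, b) :: (a, !b) :: L₃) : False :=
  FreeGroup.reduce.not (L₁ := x.toWord) (p := False)
    (by rw [FreeGroup.reduce_toWord]; exact h)

end Aux

/-- Translation of a cylinder set by a single letter `g`: if `g·t` is longer than `t` then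
`g·B(t) = B(gt)`; if `gt = e` then `g·B(t)` is the complement of `B(g)`; if `gt` is
shorter and nontrivial then `g·B(t) = B(gt)`. -/
theorem stmt_13 (g t : F₂) (hg : wl g = 1) (ht : t ≠ 1) :
    (wl (g * t) = wl t + 1 → g • cyl t = cyl (g * t)) ∧
    (g * t = 1 → g • cyl t = Set.univ \ cyl g) ∧
    (wl (g * t) = wl t - 1 → g * t ≠ 1 → g • cyl t = cyl (g * t)) := by
  obtain ⟨p, hp⟩ : ∃ p, g.toWord = [p] := List.length_eq_one_iff.mp hg
  have hgmk : g = FreeGroup.mk [p] := by rw [← FreeGroup.mk_toWord (x := g), hp]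
  set q : Bool × Bool := (p.1, !p.2) with hq
  have hqp : (q.1, !q.2) = p := by simp [hq]
  have hginv : g⁻¹ = FreeGroup.mk [q] := by
    rw [hgmk, FreeGroup.inv_mk]; rfl
  have htw : t.toWord ≠ [] := fun h => ht (FreeGroup.toWord_eq_nil_iff.mp h)
  have hwt : 1 ≤ wl t := by
    rcases h : t.toWord with _ | ⟨a, l⟩
    · exact absurd h htw
    · simp [wl, h]
  refine ⟨?_, ?_, ?_⟩
  · -- (i)
    intro h1
    have hnc : ∀ tl, t.toWord ≠ q :: tl := by
      intro tl htl
      have := Aux.letter_mul_cancel p t tl htl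
      have hlen : wl (g * t) = tl.length := by rw [wl, hgmk, this]
      have hlt : wl t = tl.length + 1 := by rw [wl, htl]; simp
      omega
    have hgt : (g * t).toWord = p :: t.toWord := by
      rw [hgmk]; exact Aux.letter_mul_cons p t hnc
    ext x
    rw [Set.mem_smul_set_iff_inv_smul_mem, smul_eq_mul, Aux.mem_cyl, Aux.mem_cyl, hgt]
    constructor
    · rintro ⟨s, hs⟩
      have hz : ∀ tl, (g⁻¹ * x).toWord ≠ q :: tl := by
        intro tl htlq
        rw [← hs] at htlq
        rcases h : t.toWord with _ | ⟨hd, tl'⟩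
        · exact htw h
        · rw [h, List.cons_append] at htlq
          injection htlq with h1 _
          exact hnc tl' (by rw [h, h1])
      have hx : x.toWord = p :: (g⁻¹ * x).toWord := by
        have hkey := Aux.letter_mul_cons p (g⁻¹ * x) hz
        rwa [show FreeGroup.mk [p] * (g⁻¹ * x) = x from by rw [← hgmk]; group] at hkey
      exact ⟨s, by rw [hx, ← hs]; rfl⟩
    · rintro ⟨s, hs⟩
      have hx : x.toWord = (q.1, !q.2) :: (t.toWord ++ s) := by rw [hqp, ← hs]; simp
      have := Aux.letter_mul_cancel q x (t.toWord ++ s) hx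
      rw [← hginv] at this
      exact ⟨s, this.symm⟩
  · -- (ii)
    intro h2
    have htg : t = g⁻¹ := eq_inv_of_mul_eq_one_right h2
    have htq : t.toWord = [q] := by rw [htg, hginv]; rfl
    ext x
    rw [Set.mem_smul_set_iff_inv_smul_mem, smul_eq_mul, Aux.mem_cyl, Set.mem_diff]
    simp only [Set.mem_univ, true_and, Aux.mem_cyl, hp, htq]
    by_cases hxp : ∃ tl, x.toWord = p :: tl
    · obtain ⟨tl, hxt⟩ := hxp
      have hz : (g⁻¹ * x).toWord = tl := by
        rw [hginv]
        exact Aux.letter_mul_cancel q x tl (by rw [hxt, hqp])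
      constructor
      · rintro ⟨s, hs⟩
        rw [hz] at hs
        exfalso
        exact Aux.no_pair x [] s p.1 p.2 (by
          rw [hxt, ← hs]; simp [hq])
      · intro hc
        exact absurd ⟨tl, hxt.symm⟩ hc
    · have hz : (g⁻¹ * x).toWord = q :: x.toWord := by
        rw [hginv]
        exact Aux.letter_mul_cons q x (by
          intro tl htl
          exact hxp ⟨tl, by rw [htl, hqp]⟩)
      constructor
      · rintro - hc
        obtain ⟨s, hs⟩ := hc
        exact hxp ⟨s, hs.symm⟩
      · intro _
        exact ⟨x.toWord, by rw [hz]; rfl⟩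
  · -- (iii)
    intro h3 h3'
    have hc : ∃ tl, t.toWord = q :: tl := by
      by_contra hcc
      push_neg at hcc
      have := Aux.letter_mul_cons p t hcc
      rw [← hgmk] at this
      have : wl (g * t) = wl t + 1 := by rw [wl, this]; rfl
      omega
    obtain ⟨tl, htl⟩ := hc
    have hgt : (g * t).toWord = tl := by
      rw [hgmk]; exact Aux.letter_mul_cancel p t tl htl
    have htlne : tl ≠ [] := by
      intro h
      exact h3' (FreeGroup.toWord_eq_nil_iff.mp (by rw [hgt, h]))
    ext x
    rw [Set.mem_smul_set_iff_inv_smul_mem, smul_eq_mul, Aux.mem_cyl, Aux.mem_cyl, hgt, htl]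
    constructor
    · rintro ⟨s, hs⟩
      have hx : x.toWord = tl ++ s := by
        have hkey := Aux.letter_mul_cancel p (g⁻¹ * x) (tl ++ s) (by rw [← hs]; simp [hq])
        rwa [show FreeGroup.mk [p] * (g⁻¹ * x) = x from by rw [← hgmk]; group] at hkey
      exact ⟨s, hx.symm⟩
    · rintro ⟨s, hs⟩
      have hz : (g⁻¹ * x).toWord = q :: x.toWord := by
        rw [hginv]
        refine Aux.letter_mul_cons q x ?_
        intro u hu
        rw [hqp] at hu
        rcases tl with _ | ⟨hd, tl'⟩
        · exact htlne rfl
        · rw [← hs] at hu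
          have hhd : hd = p := by injection hu
          exact Aux.no_pair t [] tl' p.1 (!p.2) (by
            rw [htl, hhd]; simp [hq])
      rw [hz, ← hs]
      exact ⟨s, by simp⟩
end
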